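/- arXiv:2511.21427 — 8 statements merged into one kernel-verified Lean document; each statement's English description precedes it below -/
import Mathlib

section
/- Let K be a field with a valuation v : K → ℤ ∪ {∞} (a surjective additive valuation with value group ℤ). Let f = a₀ + a₁z + ⋯ + aₙzⁿ ∈ K[z] have degree n, and suppose there exist indices j, k with 1 ≤ k+1 ≤ j ≤ n such that: (i) v(aⱼ) = 0; (ii) v(aₖ)/(j−k) < v(aᵢ)/(j−i) for all 0 ≤ i ≤ j−1 with i ≠ k; (iii) if j < n then v(aₖ)/(j−k) > v(aᵢ)/(j−i) for all j+1 ≤ i ≤ n; (iv) gcd(v(aₖ), j−k) = 1. Then in any factorization f = f₁·f₂ in K[z], one of the factors has degree ≤ n − j + k. -/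
/-!
Weight the monomial `aᵢ zⁱ` by `d v(aᵢ) + m i` with `d = j - k`. By (i)–(iii) the minimal weight
of `f` is attained exactly at `k` and `j`. Breaking ties by `± i`, the minimizing index becomes
unique and is additive under multiplication (Gauss's lemma for the weighted valuation), so the
left endpoints `a₁, a₂` of the minimal edges of `f₁, f₂` sum to `k` and the right endpoints
`b₁, b₂` sum to `j`. Since `a₁` and `b₁` have the same weight, `d ∣ m (b₁ - a₁)`, hence
`d ∣ b₁ - a₁` by (iv): either `b₁ = a₁`, and then `deg f₂ ≥ b₂ ≥ j - k`, or one of `b₁, b₂` is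
at least `j - k`.
-/

open Polynomial

lemma map_one_eq_zero_of_map_mul {R : Type*} [MonoidWithZero R] [Nontrivial R]
    (v : R → WithTop ℤ) (hv0 : ∀ x : R, v x = ⊤ ↔ x = 0)
    (hvmul : ∀ x y : R, v (x * y) = v x + v y) : v 1 = 0 := by
  have h := hvmul 1 1
  rw [mul_one] at h
  lift v 1 to ℤ using fun h => one_ne_zero ((hv0 1).mp h) with u
  norm_cast at h ⊢
  omega

namespace AddValuation

variable {Γ₀ : Type*} [LinearOrderedAddCommMonoidWithTop Γ₀] {ι : Type*} {s : Finset ι}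

theorem map_sum_eq_of_lt {R : Type*} [Ring R] (v : AddValuation R Γ₀) {f : ι → R}
    [DecidableEq ι] {j : ι} (hj : j ∈ s) (hf : ∀ i ∈ s \ {j}, v (f j) < v (f i)) :
    v (∑ i ∈ s, f i) = v (f j) :=
  Valuation.map_sum_eq_of_lt v hj hf

theorem exists_map_le_sum {K : Type*} [Field K] [Nontrivial Γ₀] (v : AddValuation K Γ₀)
    {f : ι → K} (hs : ∑ i ∈ s, f i ≠ 0) : ∃ i ∈ s, v (f i) ≤ v (∑ i ∈ s, f i) := by
  by_contra! h
  exact (v.map_lt_sum (v.ne_top_iff.mpr hs) h).false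

end AddValuation

namespace Polynomial

variable {K : Type*} [Field K] (v : AddValuation K (WithTop ℤ)) (d m ε : ℤ)

/-- `newtonWeight d m (v x) i` is `d` times the valuation of the monomial `x zⁱ` for the
Gauss valuation with `v z = m / d`; the indices minimizing it over the support of a polynomial
form the edge of slope `-m / d` of its Newton polygon. (`untop₀ ⊤ = 0` is harmless: only nonzero
coefficients are ever weighted.) -/
def newtonWeight (w : WithTop ℤ) (i : ℕ) : ℤ := d * w.untop₀ + m * i

/-- Ties are broken by `ε i`: for `ε = 1` (resp. `ε = -1`) the minimizer of the key is the left
(resp. right) endpoint of the minimal edge. -/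
def newtonKey (w : WithTop ℤ) (i : ℕ) : ℤ ×ₗ ℤ := toLex (newtonWeight d m w i, ε * i)

def IsNewtonVertex (g : K[X]) (a : ℕ) : Prop :=
  g.coeff a ≠ 0 ∧ ∀ i, g.coeff i ≠ 0 → i ≠ a →
    newtonKey d m ε (v (g.coeff a)) a < newtonKey d m ε (v (g.coeff i)) i

variable {v d m ε}

lemma newtonKey_add {w₁ w₂ : WithTop ℤ} (h₁ : w₁ ≠ ⊤) (h₂ : w₂ ≠ ⊤) (a b : ℕ) :
    newtonKey d m ε (w₁ + w₂) (a + b) = newtonKey d m ε w₁ a + newtonKey d m ε w₂ b := by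
  simp only [newtonKey, newtonWeight, WithTop.untop₀_add h₁ h₂, ← toLex_add, Prod.mk_add_mk]
  congr 2 <;> push_cast <;> ring

lemma newtonKey_mono (hd : 0 ≤ d) {w₁ w₂ : WithTop ℤ} (h₂ : w₂ ≠ ⊤) (h : w₁ ≤ w₂) (i : ℕ) :
    newtonKey d m ε w₁ i ≤ newtonKey d m ε w₂ i := by
  have := mul_le_mul_of_nonneg_left (WithTop.untop₀_le_untop₀ h₂ h) hd
  refine Prod.Lex.toLex_le_toLex.mpr ?_
  simp only [newtonWeight]
  omega

lemma IsNewtonVertex.key_le {g : K[X]} {a i : ℕ} (ha : IsNewtonVertex v d m ε g a)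
    (hi : g.coeff i ≠ 0) :
    newtonKey d m ε (v (g.coeff a)) a ≤ newtonKey d m ε (v (g.coeff i)) i := by
  rcases eq_or_ne i a with rfl | hia
  · exact le_rfl
  · exact (ha.2 i hi hia).le

lemma IsNewtonVertex.key_add_lt {g h : K[X]} {a b a' b' : ℕ} (hg : IsNewtonVertex v d m ε g a)
    (hh : IsNewtonVertex v d m ε h b) (ha' : g.coeff a' ≠ 0) (hb' : h.coeff b' ≠ 0)
    (hne : (a', b') ≠ (a, b)) :
    newtonKey d m ε (v (g.coeff a)) a + newtonKey d m ε (v (h.coeff b)) b <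
      newtonKey d m ε (v (g.coeff a')) a' + newtonKey d m ε (v (h.coeff b')) b' := by
  rcases eq_or_ne a' a with rfl | hne'
  · exact add_lt_add_of_le_of_lt le_rfl (hh.2 b' hb' fun h => hne (by rw [h]))
  · exact add_lt_add_of_lt_of_le (hg.2 a' ha' hne') (hh.key_le hb')

lemma newtonKey_map_mul {x y : K} (hx : x ≠ 0) (hy : y ≠ 0) (a b : ℕ) :
    newtonKey d m ε (v (x * y)) (a + b) = newtonKey d m ε (v x) a + newtonKey d m ε (v y) b := by
  rw [v.map_mul]
  exact newtonKey_add (v.ne_top_iff.mpr hx) (v.ne_top_iff.mpr hy) a b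

lemma IsNewtonVertex.map_coeff_mul (hd : 0 ≤ d) {g h : K[X]} {a b : ℕ}
    (hg : IsNewtonVertex v d m ε g a) (hh : IsNewtonVertex v d m ε h b) :
    v ((g * h).coeff (a + b)) = v (g.coeff a * h.coeff b) := by
  classical
  have hab := mul_ne_zero hg.1 hh.1
  rw [coeff_mul]
  refine v.map_sum_eq_of_lt (j := (a, b)) (by simp) ?_
  rintro ⟨a', b'⟩ hab'
  simp only [Finset.mem_sdiff, Finset.mem_singleton,
    Finset.HasAntidiagonal.mem_antidiagonal] at hab'
  obtain ⟨hsum, hne⟩ := hab'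
  by_cases hprod : g.coeff a' * h.coeff b' = 0
  · rw [hprod, v.map_zero]
    exact lt_top_iff_ne_top.mpr (v.ne_top_iff.mpr hab)
  obtain ⟨ha', hb'⟩ := mul_ne_zero_iff.mp hprod
  have hlt := hg.key_add_lt hh ha' hb' hne
  rw [← newtonKey_map_mul hg.1 hh.1, ← newtonKey_map_mul ha' hb', hsum] at hlt
  exact lt_of_not_ge fun hle => (newtonKey_mono hd (v.ne_top_iff.mpr hab) hle _).not_gt hlt

lemma IsNewtonVertex.mul (hd : 0 ≤ d) {g h : K[X]} {a b : ℕ} (hg : IsNewtonVertex v d m ε g a)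
    (hh : IsNewtonVertex v d m ε h b) : IsNewtonVertex v d m ε (g * h) (a + b) := by
  have hdom := hg.map_coeff_mul hd hh
  refine ⟨by rw [← v.ne_top_iff, hdom, v.ne_top_iff]; exact mul_ne_zero hg.1 hh.1,
    fun i hi hia => ?_⟩
  obtain ⟨⟨a', b'⟩, hsum, hle⟩ := v.exists_map_le_sum (by rwa [coeff_mul] at hi)
  rw [Finset.HasAntidiagonal.mem_antidiagonal] at hsum
  rw [← coeff_mul] at hle
  subst hsum
  have hi' := v.ne_top_iff.mpr hi
  obtain ⟨ha', hb'⟩ := mul_ne_zero_iff.mp (v.ne_top_iff.mp (ne_top_of_le_ne_top hi' hle))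
  calc newtonKey d m ε (v ((g * h).coeff (a + b))) (a + b)
      = newtonKey d m ε (v (g.coeff a)) a + newtonKey d m ε (v (h.coeff b)) b := by
        rw [hdom, newtonKey_map_mul hg.1 hh.1]
    _ < newtonKey d m ε (v (g.coeff a')) a' + newtonKey d m ε (v (h.coeff b')) b' :=
        hg.key_add_lt hh ha' hb' fun h => hia (by simp_all)
    _ ≤ newtonKey d m ε (v ((g * h).coeff (a' + b'))) (a' + b') := by
        rw [← newtonKey_map_mul ha' hb']
        exact newtonKey_mono hd hi' hle _

lemma IsNewtonVertex.unique {g : K[X]} {a b : ℕ} (ha : IsNewtonVertex v d m ε g a)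
    (hb : IsNewtonVertex v d m ε g b) : a = b := by
  by_contra hab
  exact (ha.2 b hb.1 (Ne.symm hab)).asymm (hb.2 a ha.1 hab)

lemma exists_isNewtonVertex (hε : ε ≠ 0) {g : K[X]} (hg : g ≠ 0) :
    ∃ a, IsNewtonVertex v d m ε g a := by
  obtain ⟨a, ha, hmin⟩ := g.support.exists_min_image
    (fun i => newtonKey d m ε (v (g.coeff i)) i) (nonempty_support_iff.mpr hg)
  refine ⟨a, mem_support_iff.mp ha, fun i hi hia => (hmin i (mem_support_iff.mpr hi)).lt_of_ne ?_⟩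
  intro heq
  have : ε * a = ε * i := congrArg (fun p => (ofLex p).2) heq
  exact hia (by exact_mod_cast (mul_left_cancel₀ hε this).symm)

lemma IsNewtonVertex.newtonWeight_le {g : K[X]} {a i : ℕ} (ha : IsNewtonVertex v d m ε g a)
    (hi : g.coeff i ≠ 0) :
    newtonWeight d m (v (g.coeff a)) a ≤ newtonWeight d m (v (g.coeff i)) i :=
  (Prod.Lex.toLex_le_toLex.mp (ha.key_le hi)).elim le_of_lt fun h => h.1.le

/-- Both vertices have the minimal weight, so `d (u_a - u_b) = m (b - a)`. -/
lemma IsNewtonVertex.dvd_sub {ε' : ℤ} (hcop : IsCoprime d m) {g : K[X]} {a b : ℕ}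
    (ha : IsNewtonVertex v d m ε g a) (hb : IsNewtonVertex v d m ε' g b) : d ∣ (b : ℤ) - a := by
  have heq := le_antisymm (ha.newtonWeight_le hb.1) (hb.newtonWeight_le ha.1)
  refine hcop.dvd_of_dvd_mul_left ⟨(v (g.coeff a)).untop₀ - (v (g.coeff b)).untop₀, ?_⟩
  simp only [newtonWeight] at heq
  linear_combination -heq

lemma isNewtonVertex_of_edge {f : K[X]} {k j : ℕ} (hkj : k < j) (hk : f.coeff k ≠ 0)
    (hj : f.coeff j ≠ 0)
    (hw : newtonWeight d m (v (f.coeff k)) k = newtonWeight d m (v (f.coeff j)) j)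
    (hlt : ∀ i, f.coeff i ≠ 0 → i ≠ k → i ≠ j →
      newtonWeight d m (v (f.coeff j)) j < newtonWeight d m (v (f.coeff i)) i) :
    IsNewtonVertex v d m 1 f k ∧ IsNewtonVertex v d m (-1) f j := by
  refine ⟨⟨hk, fun i hi hik => Prod.Lex.toLex_lt_toLex.mpr ?_⟩,
    ⟨hj, fun i hi hij => Prod.Lex.toLex_lt_toLex.mpr ?_⟩⟩
  · rcases eq_or_ne i j with rfl | hij
    · exact Or.inr ⟨hw, by simp [hkj]⟩
    · exact Or.inl (hw ▸ hlt i hi hik hij)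
  · rcases eq_or_ne i k with rfl | hik
    · exact Or.inr ⟨hw.symm, by simp [hkj]⟩
    · exact Or.inl (hlt i hi hik hij)

lemma lt_newtonWeight_of_lt_mul {w : WithTop ℤ} (hw : w ≠ ⊤) {i j : ℕ}
    (h : (((j - i) * m : ℤ) : WithTop ℤ) < (d : WithTop ℤ) * w) : m * j < newtonWeight d m w i := by
  lift w to ℤ using hw
  rw [← WithTop.coe_mul, WithTop.coe_lt_coe] at h
  simp only [newtonWeight, WithTop.untop₀_coe]
  linarith

lemma isNewtonVertex_of_dumas {f : K[X]} {j k : ℕ} (hkj : k < j)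
    (hvj : v (f.coeff j) = 0) (hvk : v (f.coeff k) = (m : WithTop ℤ))
    (hlow : ∀ i : ℕ, i < j → i ≠ k →
      ((((j : ℤ) - i) * m : ℤ) : WithTop ℤ) < ((((j : ℤ) - k) : ℤ) : WithTop ℤ) * v (f.coeff i))
    (hhigh : ∀ i : ℕ, j < i → f.coeff i ≠ 0 →
      ((((j : ℤ) - i) * m : ℤ) : WithTop ℤ) < ((((j : ℤ) - k) : ℤ) : WithTop ℤ) * v (f.coeff i)) :
    IsNewtonVertex v (j - k) m 1 f k ∧ IsNewtonVertex v (j - k) m (-1) f j := by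
  have hfj : f.coeff j ≠ 0 := fun h => by simp [h] at hvj
  have hfk : f.coeff k ≠ 0 := fun h => by simp [h] at hvk
  refine isNewtonVertex_of_edge hkj hfk hfj ?_ fun i hi hik hij => ?_
  · simp only [newtonWeight, hvj, hvk, WithTop.untop₀_coe, WithTop.untop₀_zero]
    ring
  · have hne : v (f.coeff i) ≠ ⊤ := v.ne_top_iff.mpr hi
    simp only [newtonWeight, hvj, WithTop.untop₀_zero, mul_zero, zero_add]
    rcases lt_or_gt_of_ne hij with hij | hij
    · exact lt_newtonWeight_of_lt_mul hne (hlow i hij hik)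
    · exact lt_newtonWeight_of_lt_mul hne (hhigh i hij hi)

end Polynomial

theorem stmt_0_general {K : Type*} [Field K] (v : K → WithTop ℤ)
    (hv0 : ∀ x : K, v x = ⊤ ↔ x = 0)
    (hvmul : ∀ x y : K, v (x * y) = v x + v y)
    (hvadd : ∀ x y : K, min (v x) (v y) ≤ v (x + y))
    (f : Polynomial K) (n j k : ℕ) (m : ℤ)
    (hdeg : f.natDegree = n) (hk : k + 1 ≤ j)
    (hvj : v (f.coeff j) = 0)
    (hvk : v (f.coeff k) = (m : WithTop ℤ))
    (hii : ∀ i : ℕ, i < j → i ≠ k →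
      ((((j : ℤ) - i) * m : ℤ) : WithTop ℤ) < ((((j : ℤ) - k) : ℤ) : WithTop ℤ) * v (f.coeff i))
    (hiii : j < n → ∀ i : ℕ, j < i → i ≤ n →
      ((((j : ℤ) - i) * m : ℤ) : WithTop ℤ) < ((((j : ℤ) - k) : ℤ) : WithTop ℤ) * v (f.coeff i))
    (hgcd : Int.gcd m ((j : ℤ) - k) = 1) :
    ∀ f₁ f₂ : Polynomial K, f = f₁ * f₂ →
      f₁.natDegree ≤ n - j + k ∨ f₂.natDegree ≤ n - j + k := by
  intro f₁ f₂ hf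
  let V := AddValuation.of v ((hv0 0).mpr rfl) (map_one_eq_zero_of_map_mul v hv0 hvmul) hvadd hvmul
  have hin {i : ℕ} (hi : f.coeff i ≠ 0) : i ≤ n := hdeg ▸ le_natDegree_of_ne_zero hi
  obtain ⟨hvtxk, hvtxj⟩ := isNewtonVertex_of_dumas (v := V) (by omega) hvj hvk hii
    fun i hij hi => hiii (by have := hin hi; omega) i hij (hin hi)
  subst hf
  obtain ⟨hf₁, hf₂⟩ := mul_ne_zero_iff.mp fun h => hvtxk.1 (by rw [h, coeff_zero])
  have vertex {ε : ℤ} (hε : ε ≠ 0) {g : K[X]} (hg : g ≠ 0) :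
      ∃ a, IsNewtonVertex V (j - k) m ε g a :=
    exists_isNewtonVertex hε hg
  obtain ⟨a₁, ha₁⟩ := vertex one_ne_zero hf₁
  obtain ⟨a₂, ha₂⟩ := vertex one_ne_zero hf₂
  obtain ⟨b₁, hb₁⟩ := vertex (neg_ne_zero.mpr one_ne_zero) hf₁
  obtain ⟨b₂, hb₂⟩ := vertex (neg_ne_zero.mpr one_ne_zero) hf₂
  have hd : (0 : ℤ) ≤ j - k := by omega
  have hsumk : a₁ + a₂ = k := (ha₁.mul hd ha₂).unique hvtxk
  have hsumj : b₁ + b₂ = j := (hb₁.mul hd hb₂).unique hvtxj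
  have hdvd := ha₁.dvd_sub (Int.isCoprime_iff_gcd_eq_one.mpr hgcd).symm hb₁
  have hb₁deg := le_natDegree_of_ne_zero hb₁.1
  have hb₂deg := le_natDegree_of_ne_zero hb₂.1
  rw [natDegree_mul hf₁ hf₂] at hdeg
  rcases eq_or_ne ((b₁ : ℤ) - a₁) 0 with h0 | h0
  · omega
  · have := Int.natAbs_le_of_dvd_ne_zero hdvd h0
    omega

/-- Generalized Dumas factorization (Theorem 1 of the paper, value group ℤ):
any factorization has a factor of degree ≤ n - j + k. -/
theorem stmt_0 {K : Type*} [Field K] (v : K → WithTop ℤ)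
    (hv0 : ∀ x : K, v x = ⊤ ↔ x = 0)
    (hvmul : ∀ x y : K, v (x * y) = v x + v y)
    (hvadd : ∀ x y : K, min (v x) (v y) ≤ v (x + y))
    (hvsurj : ∀ g : ℤ, ∃ x : K, v x = (g : WithTop ℤ))
    (f : Polynomial K) (n j k : ℕ) (m : ℤ)
    (hdeg : f.natDegree = n) (hk : k + 1 ≤ j) (hjn : j ≤ n)
    (hvj : v (f.coeff j) = 0)
    (hvk : v (f.coeff k) = (m : WithTop ℤ))
    (hii : ∀ i : ℕ, i < j → i ≠ k →
      ((((j : ℤ) - i) * m : ℤ) : WithTop ℤ) < ((((j : ℤ) - k) : ℤ) : WithTop ℤ) * v (f.coeff i))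
    (hiii : j < n → ∀ i : ℕ, j < i → i ≤ n →
      ((((j : ℤ) - i) * m : ℤ) : WithTop ℤ) < ((((j : ℤ) - k) : ℤ) : WithTop ℤ) * v (f.coeff i))
    (hgcd : Int.gcd m ((j : ℤ) - k) = 1) :
    ∀ f₁ f₂ : Polynomial K, f = f₁ * f₂ →
      f₁.natDegree ≤ n - j + k ∨ f₂.natDegree ≤ n - j + k :=
  stmt_0_general v hv0 hvmul hvadd f n j k m hdeg hk hvj hvk hii hiii hgcd
end

section
/- Let K be a field with a surjective valuation v : K → ℤ ∪ {∞}. Let f = a₀ + a₁z + ⋯ + aₙzⁿ ∈ K[z] have degree n, and suppose: (i) v(aₙ) = 0; (ii) v(a₀)/n < v(aᵢ)/(n−i) for all 1 ≤ i ≤ n−1; (iii) gcd(v(a₀), n) = 1. Then f is irreducible in K[z]. -/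
/-!
Turn `v` into the nonarchimedean absolute value `|x| = 2 ^ (-v x)` and weight the `i`-th
coefficient by `c ^ i` with `c = 2 ^ (-m / n)`. The Gauss norm `max_i |aᵢ| cⁱ` is then
multiplicative, and the hypotheses say that for `f` it is attained at both `i = 0` and `i = n`.
If `f = q * r`, multiplicativity forces the Gauss norm of `q` to be attained at both ends as
well, so `n * v(q₀) = deg q * m`; as `gcd(m, n) = 1` this makes `n` divide `deg q`, impossible
for a proper factor.
-/

open Polynomial

noncomputable def twoPowNeg : WithTop ℤ → ℝ
  | ⊤ => 0
  | (k : ℤ) => (2 : ℝ) ^ (-(k : ℝ))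

@[simp] lemma twoPowNeg_top : twoPowNeg ⊤ = 0 := rfl

@[simp] lemma twoPowNeg_coe (k : ℤ) : twoPowNeg k = 2 ^ (-(k : ℝ)) := rfl

@[simp] lemma twoPowNeg_zero : twoPowNeg 0 = 1 := by
  simpa using twoPowNeg_coe 0

lemma twoPowNeg_add (x y : WithTop ℤ) : twoPowNeg (x + y) = twoPowNeg x * twoPowNeg y := by
  cases x with
  | top => simp
  | coe k =>
    cases y with
    | top => simp
    | coe l =>
      rw [← WithTop.coe_add, twoPowNeg_coe, twoPowNeg_coe, twoPowNeg_coe,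
        ← Real.rpow_add two_pos]
      push_cast
      ring_nf

lemma twoPowNeg_nonneg (x : WithTop ℤ) : 0 ≤ twoPowNeg x := by
  cases x <;> simp [Real.rpow_nonneg]

lemma twoPowNeg_eq_zero_iff {x : WithTop ℤ} : twoPowNeg x = 0 ↔ x = ⊤ := by
  cases x <;> simp [(Real.rpow_pos_of_pos two_pos _).ne']

lemma twoPowNeg_antitone : Antitone twoPowNeg := by
  intro x y hxy
  cases y with
  | top => exact twoPowNeg_nonneg x
  | coe l =>
    lift x to ℤ using ne_top_of_le_ne_top WithTop.coe_ne_top hxy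
    simp only [twoPowNeg_coe]
    gcongr
    · norm_num
    · exact_mod_cast hxy

lemma twoPowNeg_coe_mul_pow (k : ℤ) (s : ℝ) (i : ℕ) :
    twoPowNeg k * ((2 : ℝ) ^ (-s)) ^ i = 2 ^ (-(k + i * s)) := by
  rw [twoPowNeg_coe, ← Real.rpow_mul_natCast zero_le_two, ← Real.rpow_add two_pos]
  ring_nf

section AbsoluteValue

variable {R : Type*} [Ring R]

lemma isNonarchimedean_twoPowNeg_comp {v : R → WithTop ℤ}
    (hvadd : ∀ x y : R, min (v x) (v y) ≤ v (x + y)) :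
    IsNonarchimedean (twoPowNeg ∘ v) := fun x y =>
  twoPowNeg_antitone.map_min ▸ twoPowNeg_antitone (hvadd x y)

noncomputable def abvOfValuation (v : R → WithTop ℤ) (hv0 : ∀ x : R, v x = ⊤ ↔ x = 0)
    (hvmul : ∀ x y : R, v (x * y) = v x + v y)
    (hvadd : ∀ x y : R, min (v x) (v y) ≤ v (x + y)) : AbsoluteValue R ℝ where
  toFun := twoPowNeg ∘ v
  map_mul' x y := by simp only [Function.comp_apply, hvmul, twoPowNeg_add]
  nonneg' x := twoPowNeg_nonneg _
  eq_zero' x := twoPowNeg_eq_zero_iff.trans (hv0 x)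
  add_le' x y := (isNonarchimedean_twoPowNeg_comp hvadd x y).trans <|
    max_le_add_of_nonneg (twoPowNeg_nonneg _) (twoPowNeg_nonneg _)

@[simp] lemma abvOfValuation_apply (v : R → WithTop ℤ) (hv0 : ∀ x : R, v x = ⊤ ↔ x = 0)
    (hvmul : ∀ x y : R, v (x * y) = v x + v y)
    (hvadd : ∀ x y : R, min (v x) (v y) ≤ v (x + y)) (x : R) :
    abvOfValuation v hv0 hvmul hvadd x = twoPowNeg (v x) := rfl

end AbsoluteValue

namespace Polynomial

section Semiring

variable {R F : Type*} [Semiring R] [FunLike F R ℝ] [ZeroHomClass F R ℝ]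
  [NonnegHomClass F R ℝ] {v : F} {c : ℝ}

lemma gaussNorm_eq_of_forall_le (hc : 0 ≤ c) {p : R[X]} {j : ℕ}
    (h : ∀ i, v (p.coeff i) * c ^ i ≤ v (p.coeff j) * c ^ j) :
    p.gaussNorm v c = v (p.coeff j) * c ^ j := by
  obtain ⟨i, hi⟩ := p.exists_eq_gaussNorm v c
  exact le_antisymm (hi ▸ h i) (p.le_gaussNorm v hc j)

end Semiring

variable {R : Type*} [Ring R] {v : AbsoluteValue R ℝ} {c : ℝ}

lemma abv_coeff_zero_eq_gaussNorm_of_mul (hna : IsNonarchimedean v) (hc : 0 < c) {p q : R[X]}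
    (h0 : (p * q).coeff 0 ≠ 0) (h : (p * q).gaussNorm v c = v ((p * q).coeff 0)) :
    v (p.coeff 0) = p.gaussNorm v c := by
  rw [gaussNorm_mul hna hc, mul_coeff_zero, map_mul] at h
  rw [mul_coeff_zero] at h0
  have hp : v (p.coeff 0) ≤ p.gaussNorm v c := by simpa using p.le_gaussNorm v hc.le 0
  have hq : v (q.coeff 0) ≤ q.gaussNorm v c := by simpa using q.le_gaussNorm v hc.le 0
  exact ((mul_eq_mul_iff_eq_and_eq_of_pos' hp hq ((v.pos (left_ne_zero_of_mul h0)).trans_le hp)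
    (v.pos (right_ne_zero_of_mul h0))).1 h.symm).1

lemma abv_leadingCoeff_mul_pow_eq_gaussNorm_of_mul [IsDomain R] (hna : IsNonarchimedean v)
    (hc : 0 < c) {p q : R[X]} (hpq : p * q ≠ 0)
    (h : (p * q).gaussNorm v c = v (p * q).leadingCoeff * c ^ (p * q).natDegree) :
    v p.leadingCoeff * c ^ p.natDegree = p.gaussNorm v c := by
  have hp0 := left_ne_zero_of_mul hpq
  have hq0 := right_ne_zero_of_mul hpq
  rw [gaussNorm_mul hna hc, leadingCoeff_mul, natDegree_mul hp0 hq0, map_mul, pow_add,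
    mul_mul_mul_comm] at h
  have hp : v p.leadingCoeff * c ^ p.natDegree ≤ p.gaussNorm v c := by
    simpa using p.le_gaussNorm v hc.le p.natDegree
  have hq : v q.leadingCoeff * c ^ q.natDegree ≤ q.gaussNorm v c := by
    simpa using q.le_gaussNorm v hc.le q.natDegree
  have hpos : ∀ r : R[X], r ≠ 0 → 0 < v r.leadingCoeff * c ^ r.natDegree := fun r hr =>
    mul_pos (v.pos (leadingCoeff_ne_zero.2 hr)) (pow_pos hc _)
  exact ((mul_eq_mul_iff_eq_and_eq_of_pos' hp hq ((hpos p hp0).trans_le hp) (hpos q hq0)).1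
    h.symm).1

theorem abv_coeff_zero_eq_of_mul [IsDomain R] (hna : IsNonarchimedean v) (hc : 0 < c)
    {p q : R[X]} (h0 : (p * q).coeff 0 ≠ 0)
    (hle : ∀ i, v ((p * q).coeff i) * c ^ i ≤ v ((p * q).coeff 0))
    (hend : v (p * q).leadingCoeff * c ^ (p * q).natDegree = v ((p * q).coeff 0)) :
    v (p.coeff 0) = v p.leadingCoeff * c ^ p.natDegree := by
  have hN : (p * q).gaussNorm v c = v ((p * q).coeff 0) := by
    rw [gaussNorm_eq_of_forall_le hc.le (j := 0) (by rwa [pow_zero, mul_one]), pow_zero, mul_one]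
  have hpq : p * q ≠ 0 := fun h => h0 (by simp [h])
  rw [abv_coeff_zero_eq_gaussNorm_of_mul hna hc h0 hN,
    abv_leadingCoeff_mul_pow_eq_gaussNorm_of_mul hna hc hpq (hN.trans hend.symm)]

end Polynomial

lemma twoPowNeg_mul_pow_le_iff {n : ℕ} (hn : n ≠ 0) (m k l : ℤ) (i j : ℕ) :
    twoPowNeg k * ((2 : ℝ) ^ (-((m : ℝ) / n))) ^ i ≤
        twoPowNeg l * ((2 : ℝ) ^ (-((m : ℝ) / n))) ^ j ↔
      n * l + j * m ≤ n * k + i * m := by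
  have hn' : (0 : ℝ) < n := Nat.cast_pos.2 (Nat.pos_of_ne_zero hn)
  have hdiv (a : ℤ) (t : ℕ) : (a : ℝ) + t * (m / n) = ((n * a + t * m : ℤ) : ℝ) / n := by
    push_cast
    field_simp
  rw [twoPowNeg_coe_mul_pow, twoPowNeg_coe_mul_pow, Real.rpow_le_rpow_left_iff one_lt_two,
    neg_le_neg_iff, hdiv, hdiv, div_le_div_iff_of_pos_right hn', Int.cast_le]

lemma twoPowNeg_mul_pow_eq_iff {n : ℕ} (hn : n ≠ 0) (m k l : ℤ) (i j : ℕ) :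
    twoPowNeg k * ((2 : ℝ) ^ (-((m : ℝ) / n))) ^ i =
        twoPowNeg l * ((2 : ℝ) ^ (-((m : ℝ) / n))) ^ j ↔
      n * k + i * m = n * l + j * m := by
  rw [le_antisymm_iff, twoPowNeg_mul_pow_le_iff hn, twoPowNeg_mul_pow_le_iff hn,
    le_antisymm_iff, and_comm]

lemma twoPowNeg_mul_pow_le_of_forall_le {n : ℕ} (hn : n ≠ 0) (m : ℤ) {x : WithTop ℤ}
    {i : ℕ} (h : ∀ k : ℤ, x = k → (n : ℤ) * m ≤ n * k + i * m) :
    twoPowNeg x * ((2 : ℝ) ^ (-((m : ℝ) / n))) ^ i ≤ twoPowNeg m := by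
  cases x with
  | top => simpa using twoPowNeg_nonneg m
  | coe k => simpa using (twoPowNeg_mul_pow_le_iff hn m k m i 0).2 (by simpa using h k rfl)

lemma mul_le_mul_add_mul_of_coeff {R : Type*} [Semiring R] {v : R → WithTop ℤ} (hv0 : v 0 = ⊤)
    {f : R[X]} {n : ℕ} {m : ℤ} (hdeg : f.natDegree = n) (hvn : v (f.coeff n) = 0)
    (hv0' : v (f.coeff 0) = m)
    (hii : ∀ i : ℕ, 1 ≤ i → i < n →
      ((((n : ℤ) - i) * m : ℤ) : WithTop ℤ) < ((n : ℕ) : WithTop ℤ) * v (f.coeff i))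
    {i : ℕ} {k : ℤ} (hk : v (f.coeff i) = k) :
    (n : ℤ) * m ≤ n * k + i * m := by
  rcases Nat.eq_zero_or_pos i with rfl | hi0
  · rw [hv0', WithTop.coe_inj] at hk
    simp [hk]
  rcases lt_trichotomy i n with hin | rfl | hin
  · have h := hii i hi0 hin
    rw [hk] at h
    have : ((n : ℤ) - i) * m < n * k := by exact_mod_cast h
    linarith
  · rw [hvn, eq_comm, WithTop.coe_eq_zero] at hk
    simp [hk]
  · rw [coeff_eq_zero_of_natDegree_lt (hdeg ▸ hin), hv0] at hk
    exact absurd hk WithTop.top_ne_coe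

theorem stmt_1_general {K : Type*} [Field K] (v : K → WithTop ℤ)
    (hv0 : ∀ x : K, v x = ⊤ ↔ x = 0)
    (hvmul : ∀ x y : K, v (x * y) = v x + v y)
    (hvadd : ∀ x y : K, min (v x) (v y) ≤ v (x + y))
    (f : Polynomial K) (n : ℕ) (m : ℤ)
    (hdeg : f.natDegree = n)
    (hvn : v (f.coeff n) = 0)
    (hv0' : v (f.coeff 0) = (m : WithTop ℤ))
    (hii : ∀ i : ℕ, 1 ≤ i → i < n →
      ((((n : ℤ) - i) * m : ℤ) : WithTop ℤ) < ((n : ℕ) : WithTop ℤ) * v (f.coeff i))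
    (hgcd : Int.gcd m (n : ℤ) = 1) :
    Irreducible f := by
  have hn : n ≠ 0 := by
    rintro rfl
    rw [hv0', WithTop.coe_eq_zero] at hvn
    simp [hvn] at hgcd
  have hf0 : f.coeff 0 ≠ 0 := (hv0 _).not.1 (hv0' ▸ WithTop.coe_ne_top)
  set abv := abvOfValuation v hv0 hvmul hvadd
  have hle (i : ℕ) : abv (f.coeff i) * (2 ^ (-((m : ℝ) / n))) ^ i ≤ abv (f.coeff 0) := by
    simpa [abv, hv0'] using twoPowNeg_mul_pow_le_of_forall_le hn m fun k hk =>
      mul_le_mul_add_mul_of_coeff ((hv0 0).2 rfl) hdeg hvn hv0' hii hk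
  have hend : abv f.leadingCoeff * (2 ^ (-((m : ℝ) / n))) ^ f.natDegree = abv (f.coeff 0) := by
    simpa [abv, leadingCoeff, hdeg, hvn, hv0'] using
      (twoPowNeg_mul_pow_eq_iff hn m 0 m n 0).2 (by ring)
  have hfu : ¬IsUnit f := fun hu => hn (hdeg ▸ natDegree_eq_zero_of_isUnit hu)
  rw [irreducible_iff_lt_natDegree_lt (fun h => hf0 (by simp [h])) hfu]
  rintro q hq hdq ⟨r, rfl⟩
  have key := abv_coeff_zero_eq_of_mul (isNonarchimedean_twoPowNeg_comp hvadd) (by positivity)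
    hf0 hle hend
  rw [mul_coeff_zero] at hf0
  lift v (q.coeff 0) to ℤ using (hv0 _).not.2 (left_ne_zero_of_mul hf0) with k hk
  have hkd := (twoPowNeg_mul_pow_eq_iff hn m k 0 0 q.natDegree).1
    (by simpa [abv, hq, ← hk] using key)
  push_cast at hkd
  have hdvd : (n : ℤ) ∣ q.natDegree :=
    Int.dvd_of_dvd_mul_left_of_gcd_one ⟨k, by linarith⟩ (by rwa [Int.gcd_comm])
  rw [hdeg, Finset.mem_Ioc] at hdq
  have := Nat.le_of_dvd hdq.1 (Int.natCast_dvd_natCast.1 hdvd)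
  omega

/-- Generalized Dumas irreducibility criterion (case j = n, k = 0). -/
theorem stmt_1 {K : Type*} [Field K] (v : K → WithTop ℤ)
    (hv0 : ∀ x : K, v x = ⊤ ↔ x = 0)
    (hvmul : ∀ x y : K, v (x * y) = v x + v y)
    (hvadd : ∀ x y : K, min (v x) (v y) ≤ v (x + y))
    (hvsurj : ∀ g : ℤ, ∃ x : K, v x = (g : WithTop ℤ))
    (f : Polynomial K) (n : ℕ) (m : ℤ)
    (hdeg : f.natDegree = n)
    (hvn : v (f.coeff n) = 0)
    (hv0' : v (f.coeff 0) = (m : WithTop ℤ))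
    (hii : ∀ i : ℕ, 1 ≤ i → i < n →
      ((((n : ℤ) - i) * m : ℤ) : WithTop ℤ) < ((n : ℕ) : WithTop ℤ) * v (f.coeff i))
    (hgcd : Int.gcd m (n : ℤ) = 1) :
    Irreducible f :=
  stmt_1_general v hv0 hvmul hvadd f n m hdeg hvn hv0' hii hgcd
end

section
/- Let K be a field with a surjective valuation v : K → ℤ ∪ {∞}. Let f = a₀ + a₁z + ⋯ + aₙzⁿ ∈ K[z] of degree n satisfy: (i) v(aₙ) = 0; (ii) there is k with 0 ≤ k < n such that v(aₖ)/(n−k) < v(aᵢ)/(n−i) for all 0 ≤ i ≤ n−1, i ≠ k; (iii) gcd(v(aₖ), n−k) = 1. Then in any factorization f = f₁·f₂ in K[z], one of the factors has degree ≤ k. -/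
/-!
Give `z` the value `μ = m / (n - k)`, i.e. weigh the term `aᵢ zⁱ` by `(n - k) v(aᵢ) + i m`.
By (i) and (ii) this weight is minimal, equal to `n m`, at `i = k` and at `i = n`. For the Gauss
valuation with `v(z) = μ`, the first index at which the weight of a product is minimal is the sum
of the corresponding indices of the factors, while the weights of the leading terms add up.
Hence if `f = g h` with `deg g = r > k` and `deg h = s`, the first minimal index `i` of `g` is at
most `k`, and the weight of `g` is also minimal at `r`. Equating the two weights gives
`(n - k) ∣ (r - i) m`, so `n - k ≤ r - i` by (iii), that is, `s ≤ k - i ≤ k`.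
-/

open Polynomial Finset

def IsFirstArgmin {α : Type*} [Preorder α] (φ : ℕ → α) (i : ℕ) : Prop :=
  (∀ j, φ i ≤ φ j) ∧ ∀ j < i, φ i < φ j

theorem exists_isFirstArgmin {α : Type*} [LinearOrder α] {φ : ℕ → α}
    (h : ∃ i, ∀ j, φ i ≤ φ j) : ∃ i, IsFirstArgmin φ i := by
  classical
  refine ⟨Nat.find h, Nat.find_spec h, fun j hj => ?_⟩
  obtain ⟨l, hl⟩ := not_forall.1 (Nat.find_min h hj)
  exact (Nat.find_spec h l).trans_lt (not_le.1 hl)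

theorem nsmul_top {Γ₀ : Type*} [LinearOrderedAddCommMonoidWithTop Γ₀] {c : ℕ}
    (hc : c ≠ 0) : c • (⊤ : Γ₀) = ⊤ := by
  obtain ⟨d, rfl⟩ := Nat.exists_eq_succ_of_ne_zero hc
  rw [succ_nsmul, add_top]

theorem exists_addValuation_eq {R Γ : Type*} [Ring R] [AddCommGroup Γ] [LinearOrder Γ]
    [IsOrderedAddMonoid Γ] (v : R → WithTop Γ) (h0 : v 0 = ⊤) (h1 : v 1 ≠ ⊤)
    (hadd : ∀ x y, min (v x) (v y) ≤ v (x + y)) (hmul : ∀ x y, v (x * y) = v x + v y) :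
    ∃ w : AddValuation R (WithTop Γ), ⇑w = v := by
  have hv1 : v 1 = 0 := by
    have h := hmul 1 1
    rw [one_mul] at h
    lift v 1 to Γ using h1 with a
    norm_cast at h ⊢
    exact left_eq_add.1 h
  exact ⟨AddValuation.of v h0 hv1 hadd hmul, rfl⟩

namespace AddValuation

variable {R Γ₀ : Type*} [Ring R] [LinearOrderedAddCommMonoidWithTop Γ₀]

def nsmul (v : AddValuation R Γ₀) (c : ℕ) (hc : c ≠ 0) : AddValuation R Γ₀ :=
  v.map (nsmulAddMonoidHom c) (nsmul_top hc) fun _ _ h => nsmul_le_nsmul_right h c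

@[simp]
theorem nsmul_apply (v : AddValuation R Γ₀) {c : ℕ} (hc : c ≠ 0) (x : R) :
    v.nsmul c hc x = c • v x :=
  rfl

end AddValuation

namespace Polynomial

section TermVal

variable {R Γ : Type*} [CommRing R] [AddCommGroup Γ] [LinearOrder Γ] [IsOrderedAddMonoid Γ]
  (v : AddValuation R (WithTop Γ)) (μ : Γ)

/-- The value of the term `aᵢ zⁱ` of `g = ∑ aᵢ zⁱ` for the Gauss valuation extending `v`
with `v(z) = μ`. -/
def termVal (g : R[X]) (i : ℕ) : WithTop Γ :=
  v (g.coeff i) + ((i • μ : Γ) : WithTop Γ)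

variable {v μ}

theorem termVal_of_natDegree_lt {g : R[X]} {i : ℕ} (h : g.natDegree < i) :
    termVal v μ g i = ⊤ := by
  simp [termVal, coeff_eq_zero_of_natDegree_lt h]

theorem exists_isFirstArgmin_termVal (g : R[X]) : ∃ i, IsFirstArgmin (termVal v μ g) i := by
  apply exists_isFirstArgmin
  obtain ⟨i, -, hi⟩ := (range (g.natDegree + 1)).exists_min_image (termVal v μ g)
    nonempty_range_add_one
  refine ⟨i, fun j => ?_⟩
  rcases le_or_gt j g.natDegree with hj | hj
  · exact hi j (mem_range.2 (Nat.lt_succ_of_le hj))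
  · rw [termVal_of_natDegree_lt hj]
    exact le_top

theorem termVal_add_termVal (p q : R[X]) (i j : ℕ) :
    termVal v μ p i + termVal v μ q j =
      v (p.coeff i * q.coeff j) + (((i + j) • μ : Γ) : WithTop Γ) := by
  simp only [termVal, v.map_mul, add_nsmul, WithTop.coe_add]
  abel

theorem termVal_mul_natDegree (p q : R[X]) :
    termVal v μ (p * q) (p.natDegree + q.natDegree) =
      termVal v μ p p.natDegree + termVal v μ q q.natDegree := by
  rw [termVal_add_termVal, termVal, coeff_mul_degree_add_degree]
  rfl

theorem exists_termVal_add_le_termVal_mul (p q : R[X]) (l : ℕ) :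
    ∃ x ∈ antidiagonal l,
      termVal v μ p x.1 + termVal v μ q x.2 ≤ termVal v μ (p * q) l := by
  obtain ⟨x, hx, hmin⟩ := (antidiagonal l).exists_min_image
    (fun x => v (p.coeff x.1 * q.coeff x.2)) ⟨(0, l), by simp⟩
  refine ⟨x, hx, ?_⟩
  rw [termVal_add_termVal, HasAntidiagonal.mem_antidiagonal.1 hx, termVal, coeff_mul]
  exact add_le_add_left (v.map_le_sum hmin) _

theorem termVal_mul_of_forall_lt {p q : R[X]} {i j : ℕ}
    (h : ∀ x ∈ antidiagonal (i + j), x ≠ (i, j) →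
      termVal v μ p i + termVal v μ q j < termVal v μ p x.1 + termVal v μ q x.2) :
    termVal v μ (p * q) (i + j) = termVal v μ p i + termVal v μ q j := by
  classical
  have hlt : ∀ x ∈ (antidiagonal (i + j)).erase (i, j),
      v (p.coeff i * q.coeff j) < v (p.coeff x.1 * q.coeff x.2) := by
    intro x hx
    have hx' := h x (mem_of_mem_erase hx) (ne_of_mem_erase hx)
    rwa [termVal_add_termVal, termVal_add_termVal,
      HasAntidiagonal.mem_antidiagonal.1 (mem_of_mem_erase hx),
      WithTop.add_lt_add_iff_right WithTop.coe_ne_top] at hx'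
  rw [termVal_add_termVal, termVal, coeff_mul,
    ← add_sum_erase _ _ (a := (i, j)) (HasAntidiagonal.mem_antidiagonal.2 rfl)]
  congr 1
  rcases ((antidiagonal (i + j)).erase (i, j)).eq_empty_or_nonempty with hs | ⟨y, hy⟩
  · rw [hs, sum_empty, add_zero]
  · exact v.map_add_eq_of_lt_left (v.map_lt_sum (hlt y hy).ne_top hlt)

theorem isFirstArgmin_termVal_mul {p q : R[X]} {i j : ℕ}
    (hi : IsFirstArgmin (termVal v μ p) i) (hj : IsFirstArgmin (termVal v μ q) j)
    (hpi : termVal v μ p i ≠ ⊤) (hqj : termVal v μ q j ≠ ⊤) :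
    termVal v μ (p * q) (i + j) = termVal v μ p i + termVal v μ q j ∧
      IsFirstArgmin (termVal v μ (p * q)) (i + j) := by
  have hle : ∀ x : ℕ × ℕ, termVal v μ p i + termVal v μ q j ≤
      termVal v μ p x.1 + termVal v μ q x.2 := fun x => add_le_add (hi.1 x.1) (hj.1 x.2)
  have hlt : ∀ x : ℕ × ℕ, x.1 < i ∨ x.2 < j → termVal v μ p i + termVal v μ q j <
      termVal v μ p x.1 + termVal v μ q x.2
    | _, .inl h => WithTop.add_lt_add_of_lt_of_le hqj (hi.2 _ h) (hj.1 _)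
    | _, .inr h => WithTop.add_lt_add_of_le_of_lt hpi (hi.1 _) (hj.2 _ h)
  have heq : termVal v μ (p * q) (i + j) = termVal v μ p i + termVal v μ q j := by
    refine termVal_mul_of_forall_lt fun x hx hne => hlt x ?_
    rw [HasAntidiagonal.mem_antidiagonal] at hx
    rw [Ne, Prod.ext_iff] at hne
    omega
  refine ⟨heq, fun l => ?_, fun l hl => ?_⟩ <;>
    obtain ⟨x, hx, hxl⟩ := exists_termVal_add_le_termVal_mul (v := v) (μ := μ) p q l <;>
    rw [heq]
  · exact (hle x).trans hxl
  · rw [HasAntidiagonal.mem_antidiagonal] at hx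
    exact (hlt x (by omega)).trans_le hxl

theorem exists_le_termVal_eq_natDegree {p q : R[X]} {k : ℕ}
    (hmin : ∀ l, termVal v μ (p * q) k ≤ termVal v μ (p * q) l)
    (hlead : termVal v μ (p * q) (p.natDegree + q.natDegree) = termVal v μ (p * q) k)
    (htop : termVal v μ (p * q) k ≠ ⊤) :
    ∃ i ≤ k, termVal v μ p i = termVal v μ p p.natDegree := by
  obtain ⟨i, hi⟩ := exists_isFirstArgmin_termVal (v := v) (μ := μ) p
  obtain ⟨j, hj⟩ := exists_isFirstArgmin_termVal (v := v) (μ := μ) q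
  have hsplit := termVal_mul_natDegree (v := v) (μ := μ) p q
  rw [hlead] at hsplit
  rw [hsplit] at htop
  have hp : termVal v μ p i ≠ ⊤ := ne_top_of_le_ne_top (WithTop.add_ne_top.1 htop).1 (hi.1 _)
  have hq : termVal v μ q j ≠ ⊤ := ne_top_of_le_ne_top (WithTop.add_ne_top.1 htop).2 (hj.1 _)
  obtain ⟨heq, hij⟩ := isFirstArgmin_termVal_mul hi hj hp hq
  refine ⟨i, ?_, ?_⟩
  · by_contra! hki
    exact (hij.2 k (by omega)).not_ge (hmin _)
  · have hAB : termVal v μ p i + termVal v μ q j =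
        termVal v μ p p.natDegree + termVal v μ q q.natDegree := by
      rw [← heq, ← hsplit]
      exact le_antisymm (hij.1 k) (hmin _)
    by_contra hne
    exact (WithTop.add_lt_add_of_lt_of_le hq ((hi.1 _).lt_of_ne hne) (hj.1 _)).ne hAB

end TermVal

theorem termVal_ne_top_iff {K Γ : Type*} [Field K] [AddCommGroup Γ] [LinearOrder Γ]
    [IsOrderedAddMonoid Γ] {v : AddValuation K (WithTop Γ)} {μ : Γ} {g : K[X]} {i : ℕ} :
    termVal v μ g i ≠ ⊤ ↔ g.coeff i ≠ 0 := by
  rw [termVal, WithTop.add_ne_top, v.ne_top_iff]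
  exact and_iff_left WithTop.coe_ne_top

section Integral

variable {K : Type*} [Field K] {v : AddValuation K (WithTop ℤ)} {c : ℕ} (hc : c ≠ 0) {m : ℤ}

theorem termVal_nsmul_eq (g : K[X]) (i : ℕ) :
    termVal (v.nsmul c hc) m g i =
      ((c : ℤ) : WithTop ℤ) * v (g.coeff i) + ((i * m : ℤ) : WithTop ℤ) := by
  rw [termVal, AddValuation.nsmul_apply, nsmul_eq_mul]
  congr 1
  cases v (g.coeff i) with
  | top => rw [nsmul_top hc, WithTop.mul_top (by exact_mod_cast hc)]
  | coe a => rw [← WithTop.coe_nsmul, ← WithTop.coe_mul, nsmul_eq_mul]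

theorem le_sub_of_termVal_nsmul_eq (hcm : IsCoprime (c : ℤ) m) {g : K[X]} {i j : ℕ}
    (hij : i < j) (hj : g.coeff j ≠ 0)
    (h : termVal (v.nsmul c hc) m g i = termVal (v.nsmul c hc) m g j) : c ≤ j - i := by
  have hi : g.coeff i ≠ 0 := termVal_ne_top_iff.1 (h ▸ termVal_ne_top_iff.2 hj)
  rw [termVal_nsmul_eq, termVal_nsmul_eq] at h
  lift v (g.coeff i) to ℤ using v.ne_top_iff.2 hi with a
  lift v (g.coeff j) to ℤ using v.ne_top_iff.2 hj with b
  norm_cast at h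
  have hdvd : (c : ℤ) ∣ ((j - i : ℕ) : ℤ) :=
    hcm.dvd_of_dvd_mul_right ⟨a - b, by push_cast [hij.le]; linarith⟩
  exact_mod_cast Int.le_of_dvd (by omega) hdvd

theorem termVal_nsmul_sub_minimal {g : K[X]} {n k : ℕ} (hkn : k < n) (hdeg : g.natDegree = n)
    (hvk : v (g.coeff k) = m) (hvn : v (g.coeff n) = 0)
    (hii : ∀ i < n, i ≠ k → ((((n : ℤ) - i) * m : ℤ) : WithTop ℤ) ≤
      (((n : ℤ) - k : ℤ) : WithTop ℤ) * v (g.coeff i)) :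
    termVal (v.nsmul (n - k) (by omega)) m g k = ((n * m : ℤ) : WithTop ℤ) ∧
      termVal (v.nsmul (n - k) (by omega)) m g n = ((n * m : ℤ) : WithTop ℤ) ∧
      ∀ l, ((n * m : ℤ) : WithTop ℤ) ≤ termVal (v.nsmul (n - k) (by omega)) m g l := by
  have hcast : ((n - k : ℕ) : ℤ) = (n : ℤ) - k := by omega
  have hk : termVal (v.nsmul (n - k) (by omega)) m g k = ((n * m : ℤ) : WithTop ℤ) := by
    rw [termVal_nsmul_eq, hvk, hcast, ← WithTop.coe_mul, ← WithTop.coe_add]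
    congr 1
    ring
  have hn : termVal (v.nsmul (n - k) (by omega)) m g n = ((n * m : ℤ) : WithTop ℤ) := by
    rw [termVal_nsmul_eq, hvn, mul_zero, zero_add]
  refine ⟨hk, hn, fun l => ?_⟩
  rcases lt_trichotomy l n with hl | rfl | hl
  · rcases eq_or_ne l k with rfl | hlk
    · exact hk.ge
    rw [termVal_nsmul_eq, hcast]
    calc ((n * m : ℤ) : WithTop ℤ)
      _ = (((n - l) * m : ℤ) : WithTop ℤ) + ((l * m : ℤ) : WithTop ℤ) := by
        rw [← WithTop.coe_add]
        congr 1
        ring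
      _ ≤ _ := add_le_add_left (hii l hl hlk) _
  · exact hn.ge
  · rw [termVal_of_natDegree_lt (i := l) (hdeg ▸ hl)]
    exact le_top

end Integral

end Polynomial

theorem stmt_3_general {K : Type*} [Field K] (v : K → WithTop ℤ)
    (hv0 : ∀ x : K, v x = ⊤ ↔ x = 0)
    (hvmul : ∀ x y : K, v (x * y) = v x + v y)
    (hvadd : ∀ x y : K, min (v x) (v y) ≤ v (x + y))
    (f : Polynomial K) (n k : ℕ) (m : ℤ)
    (hdeg : f.natDegree = n) (hkn : k < n)
    (hvn : v (f.coeff n) = 0)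
    (hvk : v (f.coeff k) = (m : WithTop ℤ))
    (hii : ∀ i : ℕ, i < n → i ≠ k →
      ((((n : ℤ) - i) * m : ℤ) : WithTop ℤ) < ((((n : ℤ) - k) : ℤ) : WithTop ℤ) * v (f.coeff i))
    (hgcd : Int.gcd m ((n : ℤ) - k) = 1) :
    ∀ f₁ f₂ : Polynomial K, f = f₁ * f₂ →
      f₁.natDegree ≤ k ∨ f₂.natDegree ≤ k := by
  intro p q hf
  obtain ⟨w, rfl⟩ := exists_addValuation_eq v ((hv0 0).2 rfl)
    (fun h => one_ne_zero ((hv0 1).1 h)) hvadd hvmul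
  have hf0 : f ≠ 0 := by
    rintro rfl
    simp at hvn
  obtain ⟨hp, hq⟩ := mul_ne_zero_iff.1 (hf ▸ hf0)
  have hrs : p.natDegree + q.natDegree = n := by rw [← hdeg, hf, natDegree_mul hp hq]
  obtain ⟨hk, hn, hmin⟩ :=
    termVal_nsmul_sub_minimal hkn hdeg hvk hvn fun i hi hik => (hii i hi hik).le
  subst hf
  refine or_iff_not_imp_left.2 fun hpk => ?_
  obtain ⟨i, hik, hi⟩ := exists_le_termVal_eq_natDegree (fun l => hk ▸ hmin l)
    (by rw [hrs, hk, hn]) (hk ▸ WithTop.coe_ne_top)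
  have hcm : IsCoprime ((n - k : ℕ) : ℤ) m := by
    rw [Nat.cast_sub hkn.le]
    exact (Int.isCoprime_iff_gcd_eq_one.2 hgcd).symm
  have := le_sub_of_termVal_nsmul_eq _ hcm (by omega) (leadingCoeff_ne_zero.2 hp) hi
  omega

/-- Jhorar–Khanduja / Weintraub-type bound (value group ℤ): any factorization of f
has a factor of degree ≤ k. -/
theorem stmt_3 {K : Type*} [Field K] (v : K → WithTop ℤ)
    (hv0 : ∀ x : K, v x = ⊤ ↔ x = 0)
    (hvmul : ∀ x y : K, v (x * y) = v x + v y)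
    (hvadd : ∀ x y : K, min (v x) (v y) ≤ v (x + y))
    (hvsurj : ∀ g : ℤ, ∃ x : K, v x = (g : WithTop ℤ))
    (f : Polynomial K) (n k : ℕ) (m : ℤ)
    (hdeg : f.natDegree = n) (hkn : k < n)
    (hvn : v (f.coeff n) = 0)
    (hvk : v (f.coeff k) = (m : WithTop ℤ))
    (hii : ∀ i : ℕ, i < n → i ≠ k →
      ((((n : ℤ) - i) * m : ℤ) : WithTop ℤ) < ((((n : ℤ) - k) : ℤ) : WithTop ℤ) * v (f.coeff i))
    (hgcd : Int.gcd m ((n : ℤ) - k) = 1) :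
    ∀ f₁ f₂ : Polynomial K, f = f₁ * f₂ →
      f₁.natDegree ≤ k ∨ f₂.natDegree ≤ k :=
  stmt_3_general v hv0 hvmul hvadd f n k m hdeg hkn hvn hvk hii hgcd
end

section
/- Let Γ be a totally ordered abelian group, G_v ≤ Γ a subgroup, γ ∈ Γ, and suppose m ≥ 1 is an integer with m·γ ∈ G_v, and for every divisor d > 1 of m one has m·γ ∉ d·G_v. Then for every integer i with 1 ≤ i < m, i·γ ∉ G_v. -/
theorem AddSubgroup.gcd_nsmul_mem_iff {Γ : Type*} [AddCommGroup Γ] (G : AddSubgroup Γ) {γ : Γ}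
    {i m : ℕ} : Nat.gcd i m • γ ∈ G ↔ i • γ ∈ G ∧ m • γ ∈ G := by
  simpa only [← QuotientAddGroup.eq_zero_iff, QuotientAddGroup.mk_nsmul] using
    gcd_nsmul_eq_zero (a := (γ : Γ ⧸ G))

theorem AddSubgroup.exists_mem_nsmul_eq_div_gcd_nsmul {Γ : Type*} [AddCommGroup Γ]
    (G : AddSubgroup Γ) {γ : Γ} {i m : ℕ} (hi : i • γ ∈ G) (hm : m • γ ∈ G) :
    ∃ g ∈ G, m • γ = (m / Nat.gcd i m) • g :=
  ⟨Nat.gcd i m • γ, G.gcd_nsmul_mem_iff.2 ⟨hi, hm⟩, by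
    rw [← mul_nsmul', Nat.div_mul_cancel (Nat.gcd_dvd_right i m)]⟩

theorem stmt_4_general {Γ : Type*} [AddCommGroup Γ] (G : AddSubgroup Γ)
    (γ : Γ) (m : ℕ) (hmγ : m • γ ∈ G)
    (hdiv : ∀ d : ℕ, 1 < d → d ∣ m → ¬ ∃ g ∈ G, m • γ = d • g) :
    ∀ i : ℕ, 1 ≤ i → i < m → i • γ ∉ G := by
  intro i hi him hiG
  have hgcd_lt : Nat.gcd i m < m := (Nat.gcd_le_left m hi).trans_lt him
  refine hdiv (m / Nat.gcd i m) ?_ (Nat.div_dvd_of_dvd (Nat.gcd_dvd_right i m))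
    (G.exists_mem_nsmul_eq_div_gcd_nsmul hiG hmγ)
  rwa [Nat.lt_div_iff_mul_lt' (Nat.gcd_dvd_right i m), mul_one]

/-- Key group-theoretic lemma: if m·γ ∈ G_v but m·γ ∉ d·G_v for every divisor d > 1 of m,
then i·γ ∉ G_v for 1 ≤ i < m. -/
theorem stmt_4 {Γ : Type*} [AddCommGroup Γ] [LinearOrder Γ] [IsOrderedAddMonoid Γ] (G : AddSubgroup Γ)
    (γ : Γ) (m : ℕ) (hm : 1 ≤ m) (hmγ : m • γ ∈ G)
    (hdiv : ∀ d : ℕ, 1 < d → d ∣ m → ¬ ∃ g ∈ G, m • γ = d • g) :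
    ∀ i : ℕ, 1 ≤ i → i < m → i • γ ∉ G :=
  stmt_4_general G γ m hmγ hdiv
end

section
/- Let K be a field with valuation v : K → Γ ∪ {∞}, γ an element of an ordered abelian group containing the value group, and w the Gauss valuation on K[z] given by w(Σ αᵢ zⁱ) = minᵢ{v(αᵢ) + iγ}. For nonzero f, g ∈ K[z], let k_f, k_g denote the smallest indices at which the minimum defining w(f), w(g) respectively is attained. Then the smallest index at which the minimum defining w(fg) is attained equals k_f + k_g. -/
/-!
The coefficient of `z ^ n` in `f * g` is `∑_{i + j = n} f_i g_j`, and the Gauss term of the summand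
`f_i g_j` is `(v(f_i) + iγ) + (v(g_j) + jγ) ≥ w(f) + w(g)`, strictly so when `i < k_f` or `j < k_g`.
For `n < k_f + k_g` every summand is strictly above `w(f) + w(g)`, hence so is the sum; for
`n = k_f + k_g` the summand `f_{k_f} g_{k_g}` is the only one attaining the bound, so by the
ultrametric inequality it determines the value of the coefficient. In particular
`w(f g) = w(f) + w(g)`.
-/

open Polynomial Finset

namespace AddValuation

variable {R Γ₀ ι : Type*} [CommRing R] [LinearOrderedAddCommGroupWithTop Γ₀]
  (v : AddValuation R Γ₀) {s : Finset ι} {F : ι → R} {c a : Γ₀}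

theorem le_map_sum_add (ha : a ≠ ⊤) (hF : ∀ i ∈ s, c ≤ v (F i) + a) :
    c ≤ v (∑ i ∈ s, F i) + a := by
  have shift : ∀ y, c ≤ y + a ↔ c + -a ≤ y := fun y => by
    rw [← add_le_add_iff_left_of_ne_top ha (b := c + -a),
      LinearOrderedAddCommGroupWithTop.neg_add_cancel_right_of_ne_top ha]
  simp only [shift] at hF ⊢
  exact v.map_le_sum hF

theorem lt_map_sum_add (hc : c ≠ ⊤) (ha : a ≠ ⊤) (hF : ∀ i ∈ s, c < v (F i) + a) :
    c < v (∑ i ∈ s, F i) + a := by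
  have shift : ∀ y, c < y + a ↔ c + -a < y := fun y => by
    rw [← add_lt_add_iff_left_of_ne_top ha (b := c + -a),
      LinearOrderedAddCommGroupWithTop.neg_add_cancel_right_of_ne_top ha]
  simp only [shift] at hF ⊢
  exact v.map_lt_sum (by simp [hc, ha]) hF

end AddValuation

namespace Polynomial

section CommRing

variable {R Γ : Type*} [CommRing R] [AddCommGroup Γ] [LinearOrder Γ] [IsOrderedAddMonoid Γ]
  (v : AddValuation R (WithTop Γ)) (γ : Γ)

def gaussTerm (p : R[X]) (i : ℕ) : WithTop Γ :=
  v (p.coeff i) + ((i • γ : Γ) : WithTop Γ)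

def gaussValuation (p : R[X]) : WithTop Γ :=
  (range (p.natDegree + 1)).inf (gaussTerm v γ p)

variable {v γ} {p q : R[X]} {c d : WithTop Γ} {k l : ℕ}

theorem gaussTerm_coeff_mul_coeff (i j : ℕ) :
    v (p.coeff i * q.coeff j) + (((i + j) • γ : Γ) : WithTop Γ) =
      gaussTerm v γ p i + gaussTerm v γ q j := by
  rw [gaussTerm, gaussTerm, v.map_mul, add_nsmul, WithTop.coe_add]
  abel

theorem le_gaussTerm_mul (hp : ∀ i, c ≤ gaussTerm v γ p i) (hq : ∀ j, d ≤ gaussTerm v γ q j)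
    (n : ℕ) : c + d ≤ gaussTerm v γ (p * q) n := by
  rw [gaussTerm, coeff_mul]
  refine v.le_map_sum_add WithTop.coe_ne_top fun x hx => ?_
  rw [← mem_antidiagonal.mp hx, gaussTerm_coeff_mul_coeff]
  exact add_le_add (hp _) (hq _)

theorem lt_gaussTerm_add_gaussTerm (hc : c ≠ ⊤) (hd : d ≠ ⊤)
    (hp : ∀ i, c ≤ gaussTerm v γ p i) (hq : ∀ j, d ≤ gaussTerm v γ q j)
    (hpk : ∀ i < k, c < gaussTerm v γ p i) (hql : ∀ j < l, d < gaussTerm v γ q j)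
    {i j : ℕ} (hij : i < k ∨ j < l) : c + d < gaussTerm v γ p i + gaussTerm v γ q j := by
  rcases hij with hi | hj
  · exact WithTop.add_lt_add_of_lt_of_le hd (hpk i hi) (hq j)
  · exact WithTop.add_lt_add_of_le_of_lt hc (hp i) (hql j hj)

theorem lt_gaussTerm_mul (hc : c ≠ ⊤) (hd : d ≠ ⊤)
    (hp : ∀ i, c ≤ gaussTerm v γ p i) (hq : ∀ j, d ≤ gaussTerm v γ q j)
    (hpk : ∀ i < k, c < gaussTerm v γ p i) (hql : ∀ j < l, d < gaussTerm v γ q j)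
    {n : ℕ} (hn : n < k + l) : c + d < gaussTerm v γ (p * q) n := by
  rw [gaussTerm, coeff_mul]
  refine v.lt_map_sum_add (WithTop.add_ne_top.mpr ⟨hc, hd⟩) WithTop.coe_ne_top fun x hx => ?_
  rw [← mem_antidiagonal.mp hx, gaussTerm_coeff_mul_coeff]
  exact lt_gaussTerm_add_gaussTerm hc hd hp hq hpk hql (by have := mem_antidiagonal.mp hx; omega)

theorem isLeast_gaussTerm_mul (hc : c ≠ ⊤) (hd : d ≠ ⊤)
    (hp : ∀ i, c ≤ gaussTerm v γ p i) (hq : ∀ j, d ≤ gaussTerm v γ q j)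
    (hk : IsLeast {i | gaussTerm v γ p i = c} k) (hl : IsLeast {j | gaussTerm v γ q j = d} l) :
    IsLeast {n | gaussTerm v γ (p * q) n = c + d} (k + l) := by
  have hpk : ∀ i < k, c < gaussTerm v γ p i := fun i hi =>
    (hp i).lt_of_ne fun h => hi.not_ge (hk.2 h.symm)
  have hql : ∀ j < l, d < gaussTerm v γ q j := fun j hj =>
    (hq j).lt_of_ne fun h => hj.not_ge (hl.2 h.symm)
  have hrest : c + d < v (∑ x ∈ (antidiagonal (k + l)).erase (k, l), p.coeff x.1 * q.coeff x.2)
      + (((k + l) • γ : Γ) : WithTop Γ) := by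
    refine v.lt_map_sum_add (WithTop.add_ne_top.mpr ⟨hc, hd⟩) WithTop.coe_ne_top fun x hx => ?_
    obtain ⟨hne, hx⟩ := mem_erase.mp hx
    rw [← mem_antidiagonal.mp hx, gaussTerm_coeff_mul_coeff]
    have hsum := mem_antidiagonal.mp hx
    refine lt_gaussTerm_add_gaussTerm hc hd hp hq hpk hql ?_
    by_contra!
    exact hne (Prod.ext (by omega) (by omega))
  have hkl : gaussTerm v γ (p * q) (k + l) = c + d := by
    have hlead : v (p.coeff k * q.coeff l) + (((k + l) • γ : Γ) : WithTop Γ) = c + d := by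
      rw [gaussTerm_coeff_mul_coeff, hk.1, hl.1]
    have hmem : (k, l) ∈ antidiagonal (k + l) := mem_antidiagonal.mpr rfl
    rw [gaussTerm, coeff_mul, ← add_sum_erase _ _ hmem, v.map_add_eq_of_lt_left, hlead]
    rw [← hlead] at hrest
    exact (WithTop.add_lt_add_iff_right WithTop.coe_ne_top).mp hrest
  exact ⟨hkl, fun n hn => not_lt.mp fun h =>
    (lt_gaussTerm_mul hc hd hp hq hpk hql h).ne' hn⟩

theorem gaussValuation_le_gaussTerm (p : R[X]) (i : ℕ) :
    gaussValuation v γ p ≤ gaussTerm v γ p i := by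
  by_cases hi : i ≤ p.natDegree
  · exact inf_le (mem_range.mpr (by omega))
  · rw [gaussTerm, coeff_eq_zero_of_natDegree_lt (not_le.mp hi), v.map_zero, top_add]
    exact le_top

theorem exists_isLeast_gaussTerm_eq_gaussValuation (p : R[X]) :
    ∃ k, IsLeast {i | gaussTerm v γ p i = gaussValuation v γ p} k := by
  classical
  obtain ⟨i, -, hi⟩ := exists_mem_eq_inf _ nonempty_range_add_one (gaussTerm v γ p)
  exact ⟨_, Nat.isLeast_find ⟨i, hi.symm⟩⟩

end CommRing

section Field

variable {K Γ : Type*} [Field K] [AddCommGroup Γ] [LinearOrder Γ] [IsOrderedAddMonoid Γ]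
  {v : AddValuation K (WithTop Γ)} {γ : Γ} {p q : K[X]}

theorem gaussValuation_ne_top (hp : p ≠ 0) : gaussValuation v γ p ≠ ⊤ :=
  ne_top_of_le_ne_top
    (WithTop.add_ne_top.mpr ⟨v.ne_top_iff.mpr (leadingCoeff_ne_zero.mpr hp), WithTop.coe_ne_top⟩)
    (gaussValuation_le_gaussTerm p p.natDegree)

theorem gaussValuation_mul (hp : p ≠ 0) (hq : q ≠ 0) :
    gaussValuation v γ (p * q) = gaussValuation v γ p + gaussValuation v γ q := by
  obtain ⟨k, hk⟩ := exists_isLeast_gaussTerm_eq_gaussValuation (v := v) (γ := γ) p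
  obtain ⟨l, hl⟩ := exists_isLeast_gaussTerm_eq_gaussValuation (v := v) (γ := γ) q
  have hpq := isLeast_gaussTerm_mul (gaussValuation_ne_top hp) (gaussValuation_ne_top hq)
    (gaussValuation_le_gaussTerm p) (gaussValuation_le_gaussTerm q) hk hl
  exact le_antisymm ((gaussValuation_le_gaussTerm _ _).trans_eq hpq.1)
    (Finset.le_inf fun n _ => le_gaussTerm_mul (gaussValuation_le_gaussTerm p)
      (gaussValuation_le_gaussTerm q) n)

end Field

end Polynomial

/-- The smallest index attaining the minimum defining the Gauss valuation is additive:
for nonzero f, g, the initial index of f·g is k_f + k_g. -/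
theorem stmt_6 {K Γ Γ' : Type*} [Field K] [AddCommGroup Γ] [LinearOrder Γ] [IsOrderedAddMonoid Γ]
    [AddCommGroup Γ'] [LinearOrder Γ'] [IsOrderedAddMonoid Γ'] (ι : Γ →+ Γ')
    (hι : ∀ a b : Γ, a ≤ b ↔ ι a ≤ ι b)
    (v : K → WithTop Γ)
    (hv0 : ∀ x : K, v x = ⊤ ↔ x = 0)
    (hvmul : ∀ x y : K, v (x * y) = v x + v y)
    (hvadd : ∀ x y : K, min (v x) (v y) ≤ v (x + y))
    (γ : Γ') (w : Polynomial K → WithTop Γ')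
    (hw : ∀ f : Polynomial K, w f =
      (Finset.range (f.natDegree + 1)).inf
        (fun i => (v (f.coeff i)).map ι + ((i • γ : Γ') : WithTop Γ')))
    (f g : Polynomial K) (hf : f ≠ 0) (hg : g ≠ 0) (kf kg : ℕ)
    (hkf : IsLeast {i : ℕ | (v (f.coeff i)).map ι + ((i • γ : Γ') : WithTop Γ') = w f} kf)
    (hkg : IsLeast {i : ℕ | (v (g.coeff i)).map ι + ((i • γ : Γ') : WithTop Γ') = w g} kg) :
    IsLeast {i : ℕ | (v ((f * g).coeff i)).map ι + ((i • γ : Γ') : WithTop Γ') = w (f * g)}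
      (kf + kg) := by
  have hv1 : v 1 = 0 := by
    refine (add_left_inj_of_ne_top (mt (hv0 1).mp one_ne_zero)).mp ?_
    rw [← hvmul, mul_one, zero_add]
  let u : AddValuation K (WithTop Γ') :=
    (AddValuation.of v ((hv0 0).mpr rfl) hv1 hvadd hvmul).map ι.withTopMap rfl
      (Monotone.withTop_map fun a b => (hι a b).mp)
  have hw' : ∀ p, w p = gaussValuation u γ p := hw
  change IsLeast {i | gaussTerm u γ f i = w f} kf at hkf
  change IsLeast {i | gaussTerm u γ g i = w g} kg at hkg
  change IsLeast {i | gaussTerm u γ (f * g) i = w (f * g)} (kf + kg)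
  rw [hw'] at hkf hkg
  rw [hw', gaussValuation_mul hf hg]
  exact isLeast_gaussTerm_mul (gaussValuation_ne_top hf) (gaussValuation_ne_top hg)
    (gaussValuation_le_gaussTerm f) (gaussValuation_le_gaussTerm g) hkf hkg
end

section
/- Let 𝔽 be a field. In 𝔽(x, y)[z], the polynomial P₃ = y + xz + (1 + xy²)z² + x²yz³ + xyz⁴ factors as P₃ = (1 + xyz²)·(y + xz + z²), and both factors y + xz + z² and 1 + xyz² are irreducible in 𝔽(x,y)[z]. -/
/-!
Regard `𝔽(x, y)` as `K(y)` with `K = 𝔽(x)` and use the degree in `y` (`RatFunc.intDegree`),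
which is additive on products and ultrametric on sums. A quadratic over a field is irreducible as
soon as it has no root. A root `r` of `1 + x y z²` would give
`deg (x y r²) = 1 + 2 deg r = deg (-1) = 0`, impossible by parity. A root `r` of `y + x z + z²`
would make the three terms of degrees `1`, `deg r`, `2 deg r` sum to zero, so the largest of these
degrees would be attained twice, which no integer `deg r` allows.
-/

open Polynomial

namespace RatFunc

variable {K : Type*} [Field K]

theorem intDegree_pow {r : RatFunc K} (hr : r ≠ 0) (n : ℕ) :
    (r ^ n).intDegree = n * r.intDegree := by
  induction n with
  | zero => simp
  | succ n ih => rw [pow_succ, intDegree_mul (pow_ne_zero n hr) hr, ih]; push_cast; ring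

theorem intDegree_le_max_of_add_add_eq_zero {a b c : RatFunc K} (ha : a ≠ 0)
    (h : a + b + c = 0) : a.intDegree ≤ max b.intDegree c.intDegree := by
  have ha' : a = -(b + c) := by linear_combination h
  rw [ha', intDegree_neg]
  by_cases hc : c = 0
  · simp [hc]
  exact intDegree_add_le hc fun hbc => ha (by rw [ha', hbc, neg_zero])

theorem one_add_mul_sq_ne_zero {a : RatFunc K} (ha : Odd a.intDegree) (r : RatFunc K) :
    1 + a * r ^ 2 ≠ 0 := by
  intro h
  have ha0 : a ≠ 0 := by rintro rfl; simp at ha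
  have hr : r ≠ 0 := by rintro rfl; simp at h
  have hdeg := congrArg intDegree (show a * r ^ 2 = -1 by linear_combination h)
  rw [intDegree_mul ha0 (pow_ne_zero 2 hr), intDegree_pow hr, intDegree_neg, intDegree_one] at hdeg
  obtain ⟨k, hk⟩ := ha
  omega

theorem X_add_mul_add_sq_ne_zero {a : RatFunc K} (ha : a ≠ 0) (hd : a.intDegree = 0)
    (r : RatFunc K) : X + a * r + r ^ 2 ≠ 0 := by
  intro h
  have hr : r ≠ 0 := by rintro rfl; exact X_ne_zero (by simpa using h)
  have hX := intDegree_le_max_of_add_add_eq_zero X_ne_zero h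
  have hsq := intDegree_le_max_of_add_add_eq_zero (pow_ne_zero 2 hr)
    (show r ^ 2 + X + a * r = 0 by linear_combination h)
  rw [intDegree_mul ha hr, intDegree_pow hr, intDegree_X, hd] at hX hsq
  omega

end RatFunc

section

variable {K : Type*} [Field K]

theorem irreducible_one_add_C_mul_X_sq {a : RatFunc K} (ha : Odd a.intDegree) :
    Irreducible (1 + C a * X ^ 2 : (RatFunc K)[X]) := by
  have ha0 : a ≠ 0 := by rintro rfl; simp at ha
  refine irreducible_of_degree_le_three_of_not_isRoot ?_ fun r hr => ?_
  · rw [show (1 + C a * X ^ 2 : (RatFunc K)[X]).natDegree = 2 by compute_degree!]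
    decide
  · exact RatFunc.one_add_mul_sq_ne_zero ha r (by simpa using hr)

theorem irreducible_C_X_add_C_mul_X_add_X_sq {a : RatFunc K} (ha : a ≠ 0)
    (hd : a.intDegree = 0) :
    Irreducible (C RatFunc.X + C a * X + X ^ 2 : (RatFunc K)[X]) := by
  refine irreducible_of_degree_le_three_of_not_isRoot ?_ fun r hr => ?_
  · rw [show (C RatFunc.X + C a * X + X ^ 2 : (RatFunc K)[X]).natDegree = 2 by
      compute_degree!]
    decide
  · exact RatFunc.X_add_mul_add_sq_ne_zero ha hd r (by simpa using hr)

end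

/-- Example 3 of the paper: P₃ factors into two irreducible quadratics in 𝔽(x,y)[z]. -/
theorem stmt_12 (𝔽 : Type*) [Field 𝔽] :
    let K := RatFunc (RatFunc 𝔽)
    let x : K := RatFunc.C RatFunc.X
    let y : K := RatFunc.X
    let C : K →+* Polynomial K := Polynomial.C
    let Z : Polynomial K := Polynomial.X
    let P₃ : Polynomial K :=
      C y + C x * Z + C (1 + x * y ^ 2) * Z ^ 2 + C (x ^ 2 * y) * Z ^ 3 + C (x * y) * Z ^ 4
    P₃ = (1 + C (x * y) * Z ^ 2) * (C y + C x * Z + Z ^ 2) ∧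
      Irreducible (1 + C (x * y) * Z ^ 2) ∧ Irreducible (C y + C x * Z + Z ^ 2) := by
  intro K x y C Z P₃
  have hx : x ≠ 0 := (_root_.map_ne_zero _).mpr RatFunc.X_ne_zero
  have hdx : x.intDegree = 0 := RatFunc.intDegree_C _
  have hdxy : Odd (x * y).intDegree := by
    rw [RatFunc.intDegree_mul hx RatFunc.X_ne_zero, hdx, RatFunc.intDegree_X]
    exact odd_one
  refine ⟨?_, irreducible_one_add_C_mul_X_sq hdxy,
    irreducible_C_X_add_C_mul_X_add_X_sq hx hdx⟩
  simp only [P₃, C, map_add, map_mul, map_one, map_pow]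
  ring
end

section
/- Let K be a field with a surjective valuation v : K → ℤ ∪ {∞}, and let f = a₀ + ⋯ + aₙzⁿ ∈ K[z] satisfy the hypotheses of the generalized Dumas criterion for indices j, k with 1 ≤ k+1 ≤ j ≤ n: v(aⱼ) = 0; v(aₖ)/(j−k) < v(aᵢ)/(j−i) for all 0 ≤ i < j, i ≠ k; if j < n then v(aₖ)/(j−k) > v(aᵢ)/(j−i) for all j < i ≤ n; and gcd(v(aₖ), j−k) = 1. Then f has an irreducible factor in K[z] of degree at least j − k. -/
/-! Put `d = j - k` and weigh the coefficients of a polynomial `p = ∑ aᵢ zⁱ` by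
`d • v(aᵢ) + m i`. The indices of minimal weight form the edge of slope `-m/d` of the Newton
polygon of `p`. Comparing extreme minimising pairs in the coefficients of a product (Gauss's lemma)
shows that both endpoints of this edge, hence its length, are additive over products. Equal weights
at the endpoints `s < e` give `d (v(aₛ) - v(aₑ)) = m (e - s)`, so `gcd(d, m) = 1` forces
`d ∣ e - s`. The hypotheses say that the edge of `f` is `{k, j}`, of length `d`; hence some
irreducible factor of `f` has an edge of positive length, at least `d`, and its degree is at least
that. -/

open Finset Polynomial

theorem AddValuation.map_sum_eq_of_lt_s13 {R Γ₀ : Type*} [Ring R]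
    [LinearOrderedAddCommMonoidWithTop Γ₀] (v : AddValuation R Γ₀) {ι : Type*}
    [DecidableEq ι] {s : Finset ι} {f : ι → R} {j : ι}
    (hj : j ∈ s) (hf : ∀ i ∈ s \ {j}, v (f j) < v (f i)) :
    v (∑ i ∈ s, f i) = v (f j) := by
  rw [sum_eq_add_sum_sdiff_singleton_of_mem hj]
  rcases eq_or_ne (v (f j)) ⊤ with htop | htop
  · have : s \ {j} = ∅ := eq_empty_of_forall_notMem fun i hi => by
      simpa [htop] using hf i hi
    simp [this]
  · exact v.map_add_eq_of_lt_left (v.map_lt_sum htop hf)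

theorem WfDvdMonoid.exists_irreducible_dvd_of_map_mul_eq_add {α : Type*} [CommMonoidWithZero α]
    [WfDvdMonoid α] (φ : α → ℕ) (hunit : ∀ u, IsUnit u → φ u = 0)
    (hmul : ∀ a b, a ≠ 0 → b ≠ 0 → φ (a * b) = φ a + φ b) {f : α} (hf : f ≠ 0)
    (hφ : φ f ≠ 0) :
    ∃ g, Irreducible g ∧ g ∣ f ∧ φ g ≠ 0 := by
  induction f using WfDvdMonoid.induction_on_irreducible with
  | zero => exact absurd rfl hf
  | unit u hu => exact absurd (hunit u hu) hφ
  | mul a i ha hi ih =>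
    rw [hmul i a hi.ne_zero ha] at hφ
    by_cases hφi : φ i = 0
    · obtain ⟨g, hg, hga, hφg⟩ := ih ha (by omega)
      exact ⟨g, hg, hga.mul_left i, hφg⟩
    · exact ⟨i, hi, dvd_mul_right i a, hφi⟩

namespace NewtonPolygon

variable {K : Type*} [Field K] (v : AddValuation K (WithTop ℤ)) (d : ℕ) (m : ℤ)

def weight (p : K[X]) (i : ℕ) : WithTop ℤ := d • v (p.coeff i) + ((m * i : ℤ) : WithTop ℤ)

def minWeight (p : K[X]) : WithTop ℤ := p.support.inf (weight v d m p)

def edge (p : K[X]) : Set ℕ := {i | weight v d m p i = minWeight v d m p}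

noncomputable def edgeStart (p : K[X]) : ℕ := sInf (edge v d m p)

noncomputable def edgeEnd (p : K[X]) : ℕ := sSup (edge v d m p)

noncomputable def edgeLength (p : K[X]) : ℕ := edgeEnd v d m p - edgeStart v d m p

variable {v d m} {p q : K[X]}

theorem mem_edge {i : ℕ} : i ∈ edge v d m p ↔ weight v d m p i = minWeight v d m p := Iff.rfl

theorem exists_mem_support_weight_eq_minWeight (hp : p ≠ 0) :
    ∃ i ∈ p.support, weight v d m p i = minWeight v d m p := by
  obtain ⟨i, hi, hmin⟩ :=
    p.support.exists_mem_eq_inf (nonempty_support_iff.2 hp) (weight v d m p)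
  exact ⟨i, hi, hmin.symm⟩

theorem edge_nonempty (hp : p ≠ 0) : (edge v d m p).Nonempty :=
  let ⟨i, _, hi⟩ := exists_mem_support_weight_eq_minWeight hp; ⟨i, hi⟩

theorem edgeStart_mem (hp : p ≠ 0) : edgeStart v d m p ∈ edge v d m p :=
  Nat.sInf_mem (edge_nonempty hp)

theorem weight_eq_coe {i : ℕ} {x : ℤ} (hx : v (p.coeff i) = x) :
    weight v d m p i = ((d * x + m * i : ℤ) : WithTop ℤ) := by
  rw [weight, hx, ← WithTop.coe_nsmul, ← WithTop.coe_add, nsmul_eq_mul]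

theorem weight_add_weight (a b : ℕ) : weight v d m p a + weight v d m q b =
    d • v (p.coeff a * q.coeff b) + ((m * (a + b : ℕ) : ℤ) : WithTop ℤ) := by
  simp only [weight, v.map_mul, nsmul_add, Nat.cast_add, mul_add, WithTop.coe_add]
  abel

theorem exists_add_weight_le_weight_mul (s : ℕ) :
    ∃ a b, a + b = s ∧ weight v d m p a + weight v d m q b ≤ weight v d m (p * q) s := by
  obtain ⟨⟨a, b⟩, hab, hmin⟩ := (antidiagonal s).exists_min_image
    (fun x => v (p.coeff x.1 * q.coeff x.2)) ⟨(0, s), by simp⟩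
  refine ⟨a, b, HasAntidiagonal.mem_antidiagonal.1 hab, ?_⟩
  rw [weight_add_weight, HasAntidiagonal.mem_antidiagonal.1 hab, weight, coeff_mul]
  gcongr
  exact v.map_le_sum hmin

theorem weight_mul_of_forall_lt {a₀ b₀ : ℕ}
    (h : ∀ a b, a + b = a₀ + b₀ → a ≠ a₀ →
      weight v d m p a₀ + weight v d m q b₀ < weight v d m p a + weight v d m q b) :
    weight v d m (p * q) (a₀ + b₀) = weight v d m p a₀ + weight v d m q b₀ := by
  rw [weight_add_weight, weight, coeff_mul,
    v.map_sum_eq_of_lt_s13 (j := (a₀, b₀)) (HasAntidiagonal.mem_antidiagonal.2 rfl)]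
  rintro ⟨a, b⟩ hab
  simp only [mem_sdiff, HasAntidiagonal.mem_antidiagonal, mem_singleton, Prod.mk.injEq] at hab
  have hlt := h a b hab.1 fun ha => hab.2 ⟨ha, by omega⟩
  rw [weight_add_weight, weight_add_weight, hab.1] at hlt
  exact lt_of_nsmul_lt_nsmul_right d (lt_of_add_lt_add_right hlt)

variable [NeZero d]

theorem weight_eq_top_iff {i : ℕ} : weight v d m p i = ⊤ ↔ p.coeff i = 0 := by
  rw [weight, WithTop.add_eq_top, or_iff_left WithTop.coe_ne_top, ← v.map_pow, v.top_iff,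
    pow_eq_zero_iff (NeZero.ne d)]

theorem minWeight_le_weight (i : ℕ) : minWeight v d m p ≤ weight v d m p i := by
  by_cases hi : i ∈ p.support
  · exact Finset.inf_le hi
  · rw [weight_eq_top_iff.2 (notMem_support_iff.1 hi)]
    exact le_top

theorem minWeight_eq_of_le_weight {i₀ : ℕ} {c : WithTop ℤ}
    (hle : ∀ i, c ≤ weight v d m p i)
    (hi₀ : weight v d m p i₀ = c) : minWeight v d m p = c :=
  le_antisymm (hi₀ ▸ minWeight_le_weight i₀) (Finset.le_inf fun i _ => hle i)

theorem minWeight_ne_top (hp : p ≠ 0) : minWeight v d m p ≠ ⊤ := by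
  obtain ⟨i, hi, hmin⟩ := exists_mem_support_weight_eq_minWeight (v := v) (d := d) (m := m) hp
  rw [← hmin, Ne, weight_eq_top_iff]
  exact mem_support_iff.1 hi

theorem coeff_ne_zero_of_mem_edge (hp : p ≠ 0) {i : ℕ} (hi : i ∈ edge v d m p) :
    p.coeff i ≠ 0 :=
  fun h => minWeight_ne_top hp (hi ▸ weight_eq_top_iff.2 h)

theorem edge_bddAbove (hp : p ≠ 0) : BddAbove (edge v d m p) :=
  ⟨p.natDegree, fun _ hi => le_natDegree_of_ne_zero (coeff_ne_zero_of_mem_edge hp hi)⟩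

theorem edgeEnd_mem (hp : p ≠ 0) : edgeEnd v d m p ∈ edge v d m p :=
  Nat.sSup_mem (edge_nonempty hp) (edge_bddAbove hp)

theorem edgeStart_le_edgeEnd (hp : p ≠ 0) : edgeStart v d m p ≤ edgeEnd v d m p :=
  Nat.sInf_le (edgeEnd_mem hp)

theorem edgeLength_le_natDegree (hp : p ≠ 0) : edgeLength v d m p ≤ p.natDegree :=
  (Nat.sub_le _ _).trans (le_natDegree_of_ne_zero (coeff_ne_zero_of_mem_edge hp (edgeEnd_mem hp)))

theorem minWeight_lt_weight_of_lt_edgeStart {i : ℕ} (hi : i < edgeStart v d m p) :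
    minWeight v d m p < weight v d m p i :=
  (minWeight_le_weight i).lt_of_ne fun h => Nat.notMem_of_lt_sInf hi h.symm

theorem minWeight_lt_weight_of_edgeEnd_lt (hp : p ≠ 0) {i : ℕ} (hi : edgeEnd v d m p < i) :
    minWeight v d m p < weight v d m p i :=
  (minWeight_le_weight i).lt_of_ne fun h => hi.not_ge (le_csSup (edge_bddAbove hp) h.symm)

theorem minWeight_add_minWeight_lt (hp : p ≠ 0) (hq : q ≠ 0) {a b : ℕ}
    (h : minWeight v d m p < weight v d m p a ∨ minWeight v d m q < weight v d m q b) :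
    minWeight v d m p + minWeight v d m q < weight v d m p a + weight v d m q b := by
  rcases h with h | h
  · exact WithTop.add_lt_add_of_lt_of_le (minWeight_ne_top hq) h (minWeight_le_weight b)
  · exact WithTop.add_lt_add_of_le_of_lt (minWeight_ne_top hp) (minWeight_le_weight a) h

theorem minWeight_add_minWeight_le_weight_mul (s : ℕ) :
    minWeight v d m p + minWeight v d m q ≤ weight v d m (p * q) s := by
  obtain ⟨a, b, -, hab⟩ :=
    exists_add_weight_le_weight_mul (v := v) (d := d) (m := m) (p := p) (q := q) s
  exact (add_le_add (minWeight_le_weight a) (minWeight_le_weight b)).trans hab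

theorem weight_mul_edgeStart_add_edgeStart (hp : p ≠ 0) (hq : q ≠ 0) :
    weight v d m (p * q) (edgeStart v d m p + edgeStart v d m q) =
      minWeight v d m p + minWeight v d m q := by
  rw [weight_mul_of_forall_lt, edgeStart_mem hp, edgeStart_mem hq]
  intro a b hab ha
  rw [edgeStart_mem hp, edgeStart_mem hq]
  refine minWeight_add_minWeight_lt hp hq ?_
  rcases ha.lt_or_gt with ha | ha
  · exact .inl (minWeight_lt_weight_of_lt_edgeStart ha)
  · exact .inr (minWeight_lt_weight_of_lt_edgeStart (by omega))

theorem weight_mul_edgeEnd_add_edgeEnd (hp : p ≠ 0) (hq : q ≠ 0) :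
    weight v d m (p * q) (edgeEnd v d m p + edgeEnd v d m q) =
      minWeight v d m p + minWeight v d m q := by
  rw [weight_mul_of_forall_lt, edgeEnd_mem hp, edgeEnd_mem hq]
  intro a b hab ha
  rw [edgeEnd_mem hp, edgeEnd_mem hq]
  refine minWeight_add_minWeight_lt hp hq ?_
  rcases ha.lt_or_gt with ha | ha
  · exact .inr (minWeight_lt_weight_of_edgeEnd_lt hq (by omega))
  · exact .inl (minWeight_lt_weight_of_edgeEnd_lt hp ha)

theorem minWeight_mul (hp : p ≠ 0) (hq : q ≠ 0) :
    minWeight v d m (p * q) = minWeight v d m p + minWeight v d m q :=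
  minWeight_eq_of_le_weight minWeight_add_minWeight_le_weight_mul
    (weight_mul_edgeStart_add_edgeStart hp hq)

theorem edgeStart_mul (hp : p ≠ 0) (hq : q ≠ 0) :
    edgeStart v d m (p * q) = edgeStart v d m p + edgeStart v d m q := by
  refine le_antisymm (Nat.sInf_le ?_) (not_lt.1 fun hlt => ?_)
  · rw [mem_edge, minWeight_mul hp hq, weight_mul_edgeStart_add_edgeStart hp hq]
  obtain ⟨a, b, hab, hle⟩ := exists_add_weight_le_weight_mul (v := v) (d := d) (m := m) (p := p)
    (q := q) (edgeStart v d m (p * q))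
  rw [edgeStart_mem (mul_ne_zero hp hq), minWeight_mul hp hq] at hle
  refine (minWeight_add_minWeight_lt hp hq ?_).not_ge hle
  by_cases ha : a < edgeStart v d m p
  · exact .inl (minWeight_lt_weight_of_lt_edgeStart ha)
  · exact .inr (minWeight_lt_weight_of_lt_edgeStart (by omega))

theorem edgeEnd_mul (hp : p ≠ 0) (hq : q ≠ 0) :
    edgeEnd v d m (p * q) = edgeEnd v d m p + edgeEnd v d m q := by
  refine le_antisymm (not_lt.1 fun hlt => ?_) (le_csSup (edge_bddAbove (mul_ne_zero hp hq)) ?_)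
  · obtain ⟨a, b, hab, hle⟩ := exists_add_weight_le_weight_mul (v := v) (d := d) (m := m)
      (p := p) (q := q) (edgeEnd v d m (p * q))
    rw [edgeEnd_mem (mul_ne_zero hp hq), minWeight_mul hp hq] at hle
    refine (minWeight_add_minWeight_lt hp hq ?_).not_ge hle
    by_cases ha : edgeEnd v d m p < a
    · exact .inl (minWeight_lt_weight_of_edgeEnd_lt hp ha)
    · exact .inr (minWeight_lt_weight_of_edgeEnd_lt hq (by omega))
  · rw [mem_edge, minWeight_mul hp hq, weight_mul_edgeEnd_add_edgeEnd hp hq]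

theorem edgeLength_mul (hp : p ≠ 0) (hq : q ≠ 0) :
    edgeLength v d m (p * q) = edgeLength v d m p + edgeLength v d m q := by
  have := edgeStart_le_edgeEnd (v := v) (d := d) (m := m) hp
  have := edgeStart_le_edgeEnd (v := v) (d := d) (m := m) hq
  rw [edgeLength, edgeLength, edgeLength, edgeStart_mul hp hq, edgeEnd_mul hp hq]
  omega

theorem dvd_edgeLength (hcop : IsCoprime (d : ℤ) m) (hp : p ≠ 0) :
    d ∣ edgeLength v d m p := by
  have hs := edgeStart_mem (v := v) (d := d) (m := m) hp
  have he := edgeEnd_mem (v := v) (d := d) (m := m) hp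
  obtain ⟨x, hx⟩ :=
    WithTop.ne_top_iff_exists.1 (v.ne_top_iff.2 (coeff_ne_zero_of_mem_edge hp hs))
  obtain ⟨y, hy⟩ :=
    WithTop.ne_top_iff_exists.1 (v.ne_top_iff.2 (coeff_ne_zero_of_mem_edge hp he))
  have hxy : d * x + m * edgeStart v d m p = d * y + m * edgeEnd v d m p := by
    rw [← WithTop.coe_inj, ← weight_eq_coe hx.symm, ← weight_eq_coe hy.symm, hs, he]
  have hdvd : (d : ℤ) ∣ m * (edgeLength v d m p : ℕ) := by
    rw [edgeLength, Nat.cast_sub (edgeStart_le_edgeEnd (v := v) (d := d) (m := m) hp)]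
    exact ⟨x - y, by linarith⟩
  exact Int.natCast_dvd_natCast.1 (hcop.dvd_of_dvd_mul_left hdvd)

theorem edge_eq_pair {a b : ℕ} (hab : weight v d m p a = weight v d m p b)
    (hlt : ∀ i, i ≠ a → i ≠ b → weight v d m p a < weight v d m p i) :
    edge v d m p = {a, b} := by
  have hmin : minWeight v d m p = weight v d m p a := by
    refine minWeight_eq_of_le_weight (fun i => ?_) rfl
    by_cases ha : i = a
    · rw [ha]
    by_cases hb : i = b
    · rw [hb, hab]
    exact (hlt i ha hb).le
  ext i
  rw [mem_edge, hmin, Set.mem_insert_iff, Set.mem_singleton_iff]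
  refine ⟨fun h => ?_, ?_⟩
  · by_contra hi
    rw [not_or] at hi
    exact (hlt i hi.1 hi.2).ne' h
  · rintro (rfl | rfl)
    exacts [rfl, hab.symm]

theorem weight_lt_weight_of_mul_lt {i j : ℕ} (hj : v (p.coeff j) = 0)
    (h : ((((j : ℤ) - i) * m : ℤ) : WithTop ℤ) < ((d : ℤ) : WithTop ℤ) * v (p.coeff i)) :
    weight v d m p j < weight v d m p i := by
  have hwj : weight v d m p j = ((m * j : ℤ) : WithTop ℤ) := by simp [weight, hj]
  by_cases hi : p.coeff i = 0
  · rw [hwj, weight_eq_top_iff.2 hi]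
    exact WithTop.coe_lt_top _
  obtain ⟨x, hx⟩ := WithTop.ne_top_iff_exists.1 (v.ne_top_iff.2 hi)
  rw [hwj, weight_eq_coe hx.symm, WithTop.coe_lt_coe]
  rw [← hx, ← WithTop.coe_mul, WithTop.coe_lt_coe] at h
  linarith

theorem exists_irreducible_dvd_le_natDegree (hcop : IsCoprime (d : ℤ) m) (hp : p ≠ 0)
    (hlen : edgeLength v d m p ≠ 0) : ∃ g, Irreducible g ∧ g ∣ p ∧ d ≤ g.natDegree := by
  obtain ⟨g, hg, hgp, hglen⟩ := WfDvdMonoid.exists_irreducible_dvd_of_map_mul_eq_add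
    (edgeLength v d m)
    (fun u hu => Nat.le_zero.1
      (natDegree_eq_zero_of_isUnit hu ▸ edgeLength_le_natDegree hu.ne_zero))
    (fun _ _ => edgeLength_mul) hp hlen
  exact ⟨g, hg, hgp, (Nat.le_of_dvd (Nat.pos_of_ne_zero hglen)
    (dvd_edgeLength hcop hg.ne_zero)).trans (edgeLength_le_natDegree hg.ne_zero)⟩

theorem edgeLength_eq_of_dumas {j k : ℕ} (hjk : k + d = j) (hvj : v (p.coeff j) = 0)
    (hvk : v (p.coeff k) = m)
    (hlt : ∀ i, i < j → i ≠ k →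
      ((((j : ℤ) - i) * m : ℤ) : WithTop ℤ) < ((d : ℤ) : WithTop ℤ) * v (p.coeff i))
    (hgt : ∀ i, j < i → i ≤ p.natDegree →
      ((((j : ℤ) - i) * m : ℤ) : WithTop ℤ) < ((d : ℤ) : WithTop ℤ) * v (p.coeff i)) :
    edgeLength v d m p = d := by
  have hvj' : v (p.coeff j) = ((0 : ℤ) : WithTop ℤ) := hvj
  have hedge : edge v d m p = {j, k} := by
    refine edge_eq_pair ?_ fun i hij hik => ?_
    · rw [weight_eq_coe hvj', weight_eq_coe hvk, ← hjk]; congr 1; push_cast; ring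
    rcases hij.lt_or_gt with hij | hij
    · exact weight_lt_weight_of_mul_lt hvj (hlt i hij hik)
    by_cases hi : i ≤ p.natDegree
    · exact weight_lt_weight_of_mul_lt hvj (hgt i hij hi)
    rw [weight_eq_top_iff.2 (coeff_eq_zero_of_natDegree_lt (not_le.1 hi)), weight_eq_coe hvj']
    exact WithTop.coe_lt_top _
  rw [edgeLength, edgeStart, edgeEnd, hedge, csInf_pair, csSup_pair]
  omega

end NewtonPolygon

theorem stmt_13_general {K : Type*} [Field K] (v : K → WithTop ℤ)
    (hv0 : ∀ x : K, v x = ⊤ ↔ x = 0)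
    (hvmul : ∀ x y : K, v (x * y) = v x + v y)
    (hvadd : ∀ x y : K, min (v x) (v y) ≤ v (x + y))
    (f : Polynomial K) (n j k : ℕ) (m : ℤ)
    (hdeg : f.natDegree = n) (hk : k + 1 ≤ j)
    (hvj : v (f.coeff j) = 0)
    (hvk : v (f.coeff k) = (m : WithTop ℤ))
    (hii : ∀ i : ℕ, i < j → i ≠ k →
      ((((j : ℤ) - i) * m : ℤ) : WithTop ℤ) < ((((j : ℤ) - k) : ℤ) : WithTop ℤ) * v (f.coeff i))
    (hiii : j < n → ∀ i : ℕ, j < i → i ≤ n →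
      ((((j : ℤ) - i) * m : ℤ) : WithTop ℤ) < ((((j : ℤ) - k) : ℤ) : WithTop ℤ) * v (f.coeff i))
    (hgcd : Int.gcd m ((j : ℤ) - k) = 1) :
    ∃ g : Polynomial K, Irreducible g ∧ g ∣ f ∧ j - k ≤ g.natDegree := by
  have hv1 : v 1 = 0 := by
    obtain ⟨a, ha⟩ := WithTop.ne_top_iff_exists.1 (mt (hv0 1).1 one_ne_zero)
    have h := hvmul 1 1
    rw [mul_one, ← ha, ← WithTop.coe_add, WithTop.coe_inj] at h
    rw [← ha, WithTop.coe_eq_zero]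
    omega
  let w := AddValuation.of v ((hv0 0).2 rfl) hv1 hvadd hvmul
  have : NeZero (j - k) := ⟨by omega⟩
  have hd : (((j : ℤ) - k : ℤ) : WithTop ℤ) = (((j - k : ℕ) : ℤ) : WithTop ℤ) := by
    rw [Nat.cast_sub (by omega)]
  rw [hd] at hii hiii
  have hcop : IsCoprime ((j - k : ℕ) : ℤ) m := by
    rw [Nat.cast_sub (by omega)]
    exact (Int.isCoprime_iff_gcd_eq_one.2 hgcd).symm
  have hf : f ≠ 0 := fun h => by simp [h, (hv0 0).2] at hvj
  refine NewtonPolygon.exists_irreducible_dvd_le_natDegree (v := w) hcop hf ?_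
  rw [NewtonPolygon.edgeLength_eq_of_dumas (v := w) (by omega) hvj hvk hii
    fun i hji hin => hiii (by omega) i hji (hdeg ▸ hin)]
  exact NeZero.ne _

/-- Under the hypotheses of the generalized Dumas criterion, f has an irreducible
factor of degree at least j - k. -/
theorem stmt_13 {K : Type*} [Field K] (v : K → WithTop ℤ)
    (hv0 : ∀ x : K, v x = ⊤ ↔ x = 0)
    (hvmul : ∀ x y : K, v (x * y) = v x + v y)
    (hvadd : ∀ x y : K, min (v x) (v y) ≤ v (x + y))
    (hvsurj : ∀ g : ℤ, ∃ x : K, v x = (g : WithTop ℤ))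
    (f : Polynomial K) (n j k : ℕ) (m : ℤ)
    (hdeg : f.natDegree = n) (hk : k + 1 ≤ j) (hjn : j ≤ n)
    (hvj : v (f.coeff j) = 0)
    (hvk : v (f.coeff k) = (m : WithTop ℤ))
    (hii : ∀ i : ℕ, i < j → i ≠ k →
      ((((j : ℤ) - i) * m : ℤ) : WithTop ℤ) < ((((j : ℤ) - k) : ℤ) : WithTop ℤ) * v (f.coeff i))
    (hiii : j < n → ∀ i : ℕ, j < i → i ≤ n →
      ((((j : ℤ) - i) * m : ℤ) : WithTop ℤ) < ((((j : ℤ) - k) : ℤ) : WithTop ℤ) * v (f.coeff i))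
    (hgcd : Int.gcd m ((j : ℤ) - k) = 1) :
    ∃ g : Polynomial K, Irreducible g ∧ g ∣ f ∧ j - k ≤ g.natDegree :=
  stmt_13_general v hv0 hvmul hvadd f n j k m hdeg hk hvj hvk hii hiii hgcd
end

section
/- Let K be a field with a surjective valuation v : K → ℤ ∪ {∞}, and let f ∈ K[z] of degree n satisfy: v(aₙ) = 0, v(a₀) = 1, and n·v(aᵢ) ≥ n − i for all 0 ≤ i ≤ n−1 (i.e., v(a₀)/n ≤ v(aᵢ)/(n−i)). Then f is irreducible in K[z]. -/
/-!
Since `v` is `ℤ`-valued, `n · v(aᵢ) ≥ n - i > 0` forces `v(aᵢ) ≥ 1` for `i < n`. After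
dividing by the leading coefficient, `f` is a monic polynomial over the valuation ring
`O = {x | 0 ≤ v x}` whose lower coefficients lie in the maximal ideal `𝔪 = {x | 1 ≤ v x}`,
while `a₀ ∉ 𝔪²` because elements of `𝔪²` have valuation at least `2`. Eisenstein's criterion
makes `f` irreducible over `O`, and Gauss's lemma for the integrally closed ring `O` carries
this over to `K[X]`.
-/

open Polynomial IsLocalRing

lemma WithTop.one_le_of_pos_int {a : WithTop ℤ} (h : 0 < a) : 1 ≤ a := by
  induction a with
  | top => exact le_top
  | coe z => exact_mod_cast (by exact_mod_cast h : (0 : ℤ) < z)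

lemma WithTop.pos_of_natCast_mul_pos_int {n : ℕ} {a : WithTop ℤ}
    (h : 0 < (n : WithTop ℤ) * a) : 0 < a := by
  induction a with
  | top => exact WithTop.coe_lt_top 0
  | coe z =>
    rw [← WithTop.coe_natCast, ← WithTop.coe_mul] at h
    exact_mod_cast pos_of_mul_pos_right (by exact_mod_cast h : (0 : ℤ) < n * z) n.cast_nonneg

namespace AddValuation

variable {K : Type*} [Field K] (v : AddValuation K (WithTop ℤ))

abbrev valuationSubring : ValuationSubring K := (toValuation v).valuationSubring

lemma mem_valuationSubring_iff {x : K} : x ∈ v.valuationSubring ↔ 0 ≤ v x := Iff.rfl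

lemma mem_maximalIdeal_valuationSubring_iff {a : v.valuationSubring} :
    a ∈ maximalIdeal v.valuationSubring ↔ 1 ≤ v a := by
  rw [mem_maximalIdeal, mem_nonunits_iff,
    (Valuation.valuationSubring.integers _).isUnit_iff_valuation_eq_one]
  change ¬ v a = 0 ↔ _
  refine ⟨fun h ↦ WithTop.one_le_of_pos_int (lt_of_le_of_ne a.2 (Ne.symm h)), fun h h0 ↦ ?_⟩
  rw [h0] at h
  exact absurd h (by decide)

lemma two_le_of_mem_maximalIdeal_sq {a : v.valuationSubring}
    (ha : a ∈ maximalIdeal v.valuationSubring ^ 2) : 2 ≤ v a := by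
  rw [pow_two] at ha
  refine Submodule.mul_induction_on ha (fun x hx y hy ↦ ?_) (fun x y hx hy ↦ ?_)
  · rw [mem_maximalIdeal_valuationSubring_iff] at hx hy
    rw [Subring.coe_mul, map_mul]
    exact (add_le_add hx hy : (1 + 1 : WithTop ℤ) ≤ _)
  · rw [Subring.coe_add]
    exact v.map_le_add hx hy

theorem irreducible_of_monic_of_eisenstein {f : K[X]} (hf : f.Monic)
    (hcoeff : ∀ i < f.natDegree, 1 ≤ v (f.coeff i)) (hconst : v (f.coeff 0) = 1) :
    Irreducible f := by
  have hdeg : 0 < f.natDegree := by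
    refine Nat.pos_of_ne_zero fun h ↦ ?_
    rw [← h, ← leadingCoeff, hf.leadingCoeff, map_one] at hconst
    exact absurd hconst (by decide)
  have hint : ∀ i, f.coeff i ∈ v.valuationSubring := by
    intro i
    rw [mem_valuationSubring_iff]
    rcases lt_trichotomy i f.natDegree with hi | rfl | hi
    · exact zero_le_one.trans (hcoeff i hi)
    · rw [← leadingCoeff, hf.leadingCoeff, map_one]
    · rw [coeff_eq_zero_of_natDegree_lt hi, map_zero]
      exact le_top
  obtain ⟨f₀, hmap, hdeg₀, hf₀⟩ := lifts_and_natDegree_eq_and_monic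
    ((lifts_iff_coeff_lifts (f := algebraMap v.valuationSubring K) f).mpr
      fun i ↦ ⟨⟨_, hint i⟩, rfl⟩) hf
  have hcoeff₀ (i : ℕ) : (f₀.coeff i : K) = f.coeff i := by
    rw [← hmap, coeff_map]
    rfl
  rw [← hmap, ← hf₀.irreducible_iff_irreducible_map_fraction_map]
  refine IsEisensteinAt.irreducible ?_ (maximalIdeal.isMaximal _).isPrime hf₀.isPrimitive
    (hdeg₀ ▸ hdeg)
  refine hf₀.isEisensteinAt_of_mem_of_notMem (maximalIdeal.isMaximal _).ne_top (fun hi ↦ ?_)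
    fun h ↦ ?_
  · rw [mem_maximalIdeal_valuationSubring_iff, hcoeff₀]
    exact hcoeff _ (hdeg₀ ▸ hi)
  · have := v.two_le_of_mem_maximalIdeal_sq h
    rw [hcoeff₀, hconst] at this
    exact absurd this (by decide)

theorem irreducible_of_eisenstein {f : K[X]} (hlead : v f.leadingCoeff = 0)
    (hcoeff : ∀ i < f.natDegree, 1 ≤ v (f.coeff i)) (hconst : v (f.coeff 0) = 1) :
    Irreducible f := by
  have hf : f ≠ 0 := by
    rintro rfl
    rw [leadingCoeff_zero, map_zero] at hlead
    exact WithTop.top_ne_coe hlead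
  have hv (i : ℕ) : v ((f * C f.leadingCoeff⁻¹).coeff i) = v (f.coeff i) := by
    rw [coeff_mul_C, map_mul, map_inv, hlead, neg_zero, add_zero]
  rw [← irreducible_mul_leadingCoeff_inv]
  refine v.irreducible_of_monic_of_eisenstein (monic_mul_leadingCoeff_inv hf) (fun i hi ↦ ?_)
    (by rw [hv, hconst])
  rw [natDegree_mul_C (inv_ne_zero (leadingCoeff_ne_zero.mpr hf))] at hi
  rw [hv]
  exact hcoeff i hi

end AddValuation

theorem stmt_15_general {K : Type*} [Field K] (v : K → WithTop ℤ)
    (hv0 : ∀ x : K, v x = ⊤ ↔ x = 0)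
    (hvmul : ∀ x y : K, v (x * y) = v x + v y)
    (hvadd : ∀ x y : K, min (v x) (v y) ≤ v (x + y))
    (f : Polynomial K) (n : ℕ)
    (hdeg : f.natDegree = n)
    (hvn : v (f.coeff n) = 0)
    (hv0' : v (f.coeff 0) = (1 : WithTop ℤ))
    (hii : ∀ i : ℕ, i < n →
      ((((n : ℤ) - i) : ℤ) : WithTop ℤ) ≤ ((n : ℕ) : WithTop ℤ) * v (f.coeff i)) :
    Irreducible f := by
  have hv1 : v 1 = 0 := by
    obtain ⟨z, hz⟩ := WithTop.ne_top_iff_exists.mp (mt (hv0 1).mp one_ne_zero)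
    have h := hvmul 1 1
    rw [mul_one, ← hz, ← WithTop.coe_add, WithTop.coe_inj] at h
    rw [← hz, show z = 0 by omega, WithTop.coe_zero]
  let w := AddValuation.of v ((hv0 0).mpr rfl) hv1 hvadd hvmul
  refine w.irreducible_of_eisenstein (by rwa [leadingCoeff, hdeg]) (fun i hi ↦ ?_) hv0'
  rw [hdeg] at hi
  have hpos : (0 : WithTop ℤ) < ((n : ℤ) - i : ℤ) := by
    exact_mod_cast (by omega : (0 : ℤ) < n - i)
  exact WithTop.one_le_of_pos_int (WithTop.pos_of_natCast_mul_pos_int (hpos.trans_le (hii i hi)))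

/-- Generalized Eisenstein criterion over a discretely valued field: if v(aₙ) = 0,
v(a₀) = 1 and n·v(aᵢ) ≥ n - i for all i < n, then f is irreducible. -/
theorem stmt_15 {K : Type*} [Field K] (v : K → WithTop ℤ)
    (hv0 : ∀ x : K, v x = ⊤ ↔ x = 0)
    (hvmul : ∀ x y : K, v (x * y) = v x + v y)
    (hvadd : ∀ x y : K, min (v x) (v y) ≤ v (x + y))
    (hvsurj : ∀ g : ℤ, ∃ x : K, v x = (g : WithTop ℤ))
    (f : Polynomial K) (n : ℕ)
    (hdeg : f.natDegree = n)
    (hvn : v (f.coeff n) = 0)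
    (hv0' : v (f.coeff 0) = (1 : WithTop ℤ))
    (hii : ∀ i : ℕ, i < n →
      ((((n : ℤ) - i) : ℤ) : WithTop ℤ) ≤ ((n : ℕ) : WithTop ℤ) * v (f.coeff i)) :
    Irreducible f :=
  stmt_15_general v hv0 hvmul hvadd f n hdeg hvn hv0' hii
end
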